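/- Let T be a k-uniform hypertree with k ≥ 3. A nonzero complex number λ is an eigenvalue of the adjacency tensor A(T) if and only if there exists an induced subtree T' of T such that λ is a root of the polynomial φ(T',x) = ∑_{i ≥ 0} (−1)^i p(T',i) x^{(m(T')−i)k}, where p(T',i) is the number of i-matchings of T' (with p(T',0) = 1) and m(T') is the matching number of T'. -/

import Mathlib

/-!
Weighted uniform hypergraphs, their adjacency tensors, eigenvalues,
matchings and matching polynomials, following Wan–Wang–Hu,
"Spectra of weighted uniform hypertrees".
-/

open Finset

open scoped Classical

/-- A hypergraph on a vertex type `V`: a finite vertex set together with a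
finite set of edges (each edge being a finite set of vertices). -/
structure WHypergraph (V : Type*) where
  verts : Finset V
  edges : Finset (Finset V)

namespace WHypergraph

variable {V : Type*} [Fintype V] [DecidableEq V]

/-- `H` is a `k`-uniform hypergraph: every edge is a `k`-element subset of the
vertex set. -/
def IsUniform (H : WHypergraph V) (k : ℕ) : Prop :=
  (∀ e ∈ H.edges, e ⊆ H.verts) ∧ ∀ e ∈ H.edges, e.card = k

/-- Two vertices lie in a common edge (one step of a walk). -/
def Adj (H : WHypergraph V) (a b : V) : Prop :=
  ∃ e ∈ H.edges, a ∈ e ∧ b ∈ e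

/-- Every two vertices of `H` are joined by a walk. -/
def Connected (H : WHypergraph V) : Prop :=
  ∀ u ∈ H.verts, ∀ v ∈ H.verts, Relation.ReflTransGen H.Adj u v

/-- The data `v_0, e_1, v_1, …, e_ℓ, v_ℓ (= v_0)` (re-indexed from `0`, with
`v (i) , v (i+1 mod ℓ) ∈ e i`) form a cycle of `H`: a closed walk with no
repeated vertices and no repeated edges. -/
def IsCycleIn (H : WHypergraph V) (ℓ : ℕ) (v : ℕ → V) (e : ℕ → Finset V) : Prop :=
  2 ≤ ℓ ∧
  (∀ i < ℓ, ∀ j < ℓ, v i = v j → i = j) ∧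
  (∀ i < ℓ, ∀ j < ℓ, e i = e j → i = j) ∧
  (∀ i < ℓ, e i ∈ H.edges) ∧
  (∀ i < ℓ, v i ∈ e i ∧ v ((i + 1) % ℓ) ∈ e i)

/-- `H` contains a cycle. -/
def HasCycle (H : WHypergraph V) : Prop := ∃ ℓ v e, H.IsCycleIn ℓ v e

/-- A `k`-uniform hypertree: a connected acyclic `k`-uniform hypergraph. -/
def IsHypertree (H : WHypergraph V) (k : ℕ) : Prop :=
  H.verts.Nonempty ∧ H.IsUniform k ∧ H.Connected ∧ ¬H.HasCycle

/-- The degree of a vertex: the number of edges containing it. -/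
def degree (H : WHypergraph V) (v : V) : ℕ :=
  (H.edges.filter fun e => v ∈ e).card

/-- The subgraph induced by a vertex subset `U`. -/
def induce (H : WHypergraph V) (U : Finset V) : WHypergraph V :=
  ⟨U, H.edges.filter fun e => e ⊆ U⟩

/-- `T'` is a subtree of `T`: an induced subgraph of `T` which is itself a
`k`-uniform hypertree. -/
def IsSubtree (T T' : WHypergraph V) (k : ℕ) : Prop :=
  (∃ U : Finset V, U ⊆ T.verts ∧ T' = T.induce U) ∧ T'.IsHypertree k

/-- Delete the edge `e` from `H` together with the resulting isolated
vertices (the vertices of `e` that lie in no other edge). -/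
def delEdge (H : WHypergraph V) (e : Finset V) : WHypergraph V :=
  ⟨H.verts \ e.filter (fun v => H.degree v = 1), H.edges.erase e⟩

/-- A pendant edge of a `k`-uniform hypergraph: an edge containing exactly
`k - 1` vertices of degree one. -/
def IsPendant (H : WHypergraph V) (k : ℕ) (e : Finset V) : Prop :=
  e ∈ H.edges ∧ (e.filter fun v => H.degree v = 1).card = k - 1

/-- The entry `a_{t 0, t 1, …, t m}` of the adjacency tensor (of order `m + 1`)
of the weighted hypergraph `(H, w)`, where `wv` is the weighting on vertices and
`we` the weighting on edges: it equals `w(v)` on the diagonal entry of a vertex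
`v`, `w(e)/(k-1)!` if the indices enumerate an edge `e` (here `k = m + 1`), and
`0` otherwise. -/
noncomputable def adjEntry (H : WHypergraph V) (wv : V → ℂ) (we : Finset V → ℂ)
    {m : ℕ} (t : Fin (m + 1) → V) : ℂ :=
  if (∀ i, t i = t 0) ∧ t 0 ∈ H.verts then wv (t 0)
  else if Function.Injective t ∧ Finset.univ.image t ∈ H.edges then
    we (Finset.univ.image t) / (Nat.factorial m : ℂ)
  else 0

/-- `(lam, x)` is an eigenpair of the adjacency tensor (of order `k`) of
`(H, w)`: `x` is nonzero (as a vector indexed by the vertices) and for every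
vertex `v`, `∑_{i_2,…,i_k} a_{v i_2 … i_k} x_{i_2} ⋯ x_{i_k} = lam * x_v^(k-1)`. -/
def IsEigenpair (H : WHypergraph V) (wv : V → ℂ) (we : Finset V → ℂ) (k : ℕ)
    (lam : ℂ) (x : V → ℂ) : Prop :=
  (∃ v ∈ H.verts, x v ≠ 0) ∧
  ∀ v ∈ H.verts,
    ∑ t : Fin (k - 1) → V, H.adjEntry wv we (Fin.cons v t) * ∏ i, x (t i)
      = lam * x v ^ (k - 1)

/-- `lam` is an eigenvalue of the adjacency tensor of `(H, w)`. -/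
def IsEigenvalue (H : WHypergraph V) (wv : V → ℂ) (we : Finset V → ℂ) (k : ℕ)
    (lam : ℂ) : Prop :=
  ∃ x : V → ℂ, H.IsEigenpair wv we k lam x

/-- The spectral radius of the adjacency tensor of `(H, w)`: the largest
modulus of its eigenvalues. -/
noncomputable def spectralRadius (H : WHypergraph V) (wv : V → ℂ) (we : Finset V → ℂ)
    (k : ℕ) : ℝ :=
  sSup ((fun z : ℂ => ‖z‖) '' {lam | H.IsEigenvalue wv we k lam})

/-- The set of matchings of `H`: sets of pairwise vertex-disjoint edges
(including the empty matching). -/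
noncomputable def matchings (H : WHypergraph V) : Finset (Finset (Finset V)) :=
  H.edges.powerset.filter fun M => ∀ e ∈ M, ∀ f ∈ M, e ≠ f → Disjoint e f

/-- `V(M)`: the set of vertices covered by the matching `M`. -/
def mVerts (M : Finset (Finset V)) : Finset V := M.biUnion id

/-- The weighted matching polynomial
`μ(H,w,x) = ∑_{M ∈ M(H)} (−1)^{|M|} ∏_{e ∈ M} w(e)^k ∏_{v ∈ V(H)∖V(M)} (x − w(v))`,
evaluated at `x`. -/
noncomputable def matchPoly (H : WHypergraph V) (wv : V → ℂ) (we : Finset V → ℂ)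
    (k : ℕ) (x : ℂ) : ℂ :=
  ∑ M ∈ H.matchings,
    (-1 : ℂ) ^ M.card * (∏ e ∈ M, we e ^ k) * ∏ v ∈ H.verts \ mVerts M, (x - wv v)

/-- The matching number: the maximum size of a matching of `H`. -/
noncomputable def matchingNumber (H : WHypergraph V) : ℕ := H.matchings.sup Finset.card

/-- The polynomial `φ(H,x) = ∑_{i ≥ 0} (−1)^i p(H,i) x^{(m(H)−i)k}` where
`p(H,i)` is the number of `i`-matchings, written as a sum over all matchings,
evaluated at `x`. -/
noncomputable def phiPoly (H : WHypergraph V) (k : ℕ) (x : ℂ) : ℂ :=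
  ∑ M ∈ H.matchings, (-1 : ℂ) ^ M.card * x ^ ((H.matchingNumber - M.card) * k)

/-- `B` is a weighted vertex-edge incidence matrix of `H`: rows indexed by
vertices, columns by edges, with `B(v,e) ≠ 0` iff `v ∈ e`. -/
def IsWIM (H : WHypergraph V) (B : V → Finset V → ℂ) : Prop :=
  ∀ v ∈ H.verts, ∀ e ∈ H.edges, (B v e ≠ 0 ↔ v ∈ e)

/-- `(H, w)` is `{λ_e}`-normal with respect to the weighted incidence matrix `B`:
(C1) `∑_{e ∋ v} B(v,e) = 1` for every vertex `v`, and
(C2) `∏_{u ∈ e} B(u,e) = ∏_{u ∈ e} w(e)/(λ_e − w(u))` for every edge `e`. -/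
def IsFamilyNormalWith (H : WHypergraph V) (wv : V → ℂ) (we : Finset V → ℂ)
    (lam : Finset V → ℂ) (B : V → Finset V → ℂ) : Prop :=
  H.IsWIM B ∧
  (∀ v ∈ H.verts, ∑ e ∈ H.edges.filter (fun e => v ∈ e), B v e = 1) ∧
  (∀ e ∈ H.edges, ∏ u ∈ e, B u e = ∏ u ∈ e, we e / (lam e - wv u))

/-- `(H, w)` is `{λ_e}`-normal (with respect to some weighted incidence matrix). -/
def IsFamilyNormal (H : WHypergraph V) (wv : V → ℂ) (we : Finset V → ℂ)
    (lam : Finset V → ℂ) : Prop :=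
  ∃ B : V → Finset V → ℂ, H.IsFamilyNormalWith wv we lam B

/-- `(H, w)` is consistently `λ`-normal: it is `λ`-normal with respect to some
weighted incidence matrix `B` which moreover satisfies (C3): for every cycle
`v_0, e_1, v_1, …, e_ℓ, v_ℓ (= v_0)`,
`∏_{i=1}^{ℓ} [B(v_i,e_i)(λ − w(v_i))]/[B(v_{i−1},e_i)(λ − w(v_{i−1}))] = 1`. -/
def IsConsistentlyNormal (H : WHypergraph V) (wv : V → ℂ) (we : Finset V → ℂ)
    (lam : ℂ) : Prop :=
  ∃ B : V → Finset V → ℂ, H.IsFamilyNormalWith wv we (fun _ => lam) B ∧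
    ∀ ℓ v e, H.IsCycleIn ℓ v e →
      ∏ i ∈ Finset.range ℓ,
        (B (v ((i + 1) % ℓ)) (e i) * (lam - wv (v ((i + 1) % ℓ)))) /
          (B (v i) (e i) * (lam - wv (v i))) = 1

/-- An arc of the digraph `D(A)` associated with the adjacency tensor (of order
`k`) of `(H,w)`: there is a nonzero entry `a_{p i_2 … i_k}` with some `i_j = q`. -/
def TensorArc (H : WHypergraph V) (wv : V → ℂ) (we : Finset V → ℂ) (k : ℕ)
    (p q : V) : Prop :=
  ∃ t : Fin (k - 1) → V, H.adjEntry wv we (Fin.cons p t) ≠ 0 ∧ ∃ j, t j = q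

/-- The adjacency tensor of `(H,w)` is weakly irreducible: the associated
digraph `D(A)` is strongly connected on the vertex set of `H`. -/
def WeaklyIrreducible (H : WHypergraph V) (wv : V → ℂ) (we : Finset V → ℂ)
    (k : ℕ) : Prop :=
  ∀ a ∈ H.verts, ∀ b ∈ H.verts, Relation.ReflTransGen (H.TensorArc wv we k) a b

end WHypergraph
section HTDev
set_option linter.unusedSectionVars false
set_option linter.unusedVariables false

namespace WHypergraph

variable {V : Type*} [Fintype V] [DecidableEq V]

/-! ### Basics -/

lemma mem_matchings {H : WHypergraph V} {M : Finset (Finset V)} :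
    M ∈ H.matchings ↔ M ⊆ H.edges ∧ ∀ e ∈ M, ∀ f ∈ M, e ≠ f → Disjoint e f := by
  simp [matchings]

lemma empty_mem_matchings (H : WHypergraph V) : (∅ : Finset (Finset V)) ∈ H.matchings := by
  simp [mem_matchings]

@[simp] lemma verts_induce (H : WHypergraph V) (U : Finset V) : (H.induce U).verts = U := rfl

@[simp] lemma edges_induce (H : WHypergraph V) (U : Finset V) :
    (H.induce U).edges = H.edges.filter (fun e => e ⊆ U) := rfl

lemma induce_induce (H : WHypergraph V) {U U' : Finset V} (h : U' ⊆ U) :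
    (H.induce U).induce U' = H.induce U' := by
  unfold induce
  congr 1
  ext e
  simp only [Finset.mem_filter, and_assoc]
  constructor
  · rintro ⟨he, -, h2⟩; exact ⟨he, h2⟩
  · rintro ⟨he, h2⟩; exact ⟨he, h2.trans h, h2⟩

lemma isUniform_induce {H : WHypergraph V} {k : ℕ} (hU : H.IsUniform k) (U : Finset V) :
    (H.induce U).IsUniform k := by
  constructor
  · intro e he; simp only [edges_induce, Finset.mem_filter] at he; exact he.2
  · intro e he; simp only [edges_induce, Finset.mem_filter] at he; exact hU.2 e he.1

lemma noCycle_induce {H : WHypergraph V} (h : ¬ H.HasCycle) (U : Finset V) :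
    ¬ (H.induce U).HasCycle := by
  rintro ⟨ℓ, v, e, h1, h2, h3, h4, h5⟩
  exact h ⟨ℓ, v, e, h1, h2, h3, fun i hi => (Finset.mem_filter.1 (h4 i hi)).1, h5⟩

/-- every vertex of a connected hypergraph with at least two vertices lies in an edge -/
lemma exists_edge_mem {H : WHypergraph V} (hc : H.Connected) {v : V} (hv : v ∈ H.verts)
    {w : V} (hw : w ∈ H.verts) (hvw : v ≠ w) : ∃ e ∈ H.edges, v ∈ e := by
  have := hc v hv w hw
  rcases Relation.ReflTransGen.cases_head this with h | ⟨c, ⟨e, he, hve, hce⟩, -⟩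
  · exact absurd h hvw
  · exact ⟨e, he, hve⟩

lemma connected_of_forall {H : WHypergraph V} {r : V} (hr : r ∈ H.verts)
    (h : ∀ v ∈ H.verts, Relation.ReflTransGen H.Adj v r) : H.Connected := by
  have hsymm : Symmetric H.Adj := by
    rintro a b ⟨e, he, ha, hb⟩; exact ⟨e, he, hb, ha⟩
  intro u hu v hv
  exact (h u hu).trans ((@Relation.ReflTransGen.stdSymm _ _ ⟨hsymm⟩).symm _ _ (h v hv))

/-! ### psi and locSum -/

/-- `ψ(H,λ) = ∑_M (−1)^{|M|} λ^{|V(H) \ V(M)|}`. -/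
noncomputable def psi (H : WHypergraph V) (lam : ℂ) : ℂ :=
  ∑ M ∈ H.matchings, (-1 : ℂ) ^ M.card * lam ^ (H.verts \ mVerts M).card

/-- `S_v = ∑_{e ∋ v} ∏_{u ∈ e ∖ v} x_u`. -/
noncomputable def locSum (H : WHypergraph V) (x : V → ℂ) (v : V) : ℂ :=
  ∑ e ∈ H.edges.filter (fun e => v ∈ e), ∏ u ∈ e.erase v, x u

lemma locSum_congr {H : WHypergraph V} {x y : V → ℂ} {v : V}
    (h : ∀ f ∈ H.edges, v ∈ f → ∀ u ∈ f, x u = y u) : locSum H x v = locSum H y v := by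
  refine Finset.sum_congr rfl fun f hf => ?_
  rw [Finset.mem_filter] at hf
  exact Finset.prod_congr rfl fun u hu => h f hf.1 hf.2 u (Finset.mem_of_mem_erase hu)

lemma locSum_smul {H : WHypergraph V} {k : ℕ} (hU : H.IsUniform k) (hk : 1 ≤ k)
    (t : ℂ) (x : V → ℂ) (v : V) :
    locSum H (fun u => t * x u) v = t ^ (k - 1) * locSum H x v := by
  unfold locSum
  rw [Finset.mul_sum]
  refine Finset.sum_congr rfl fun f hf => ?_
  rw [Finset.mem_filter] at hf
  rw [Finset.prod_mul_distrib, Finset.prod_const,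
    Finset.card_erase_of_mem hf.2, hU.2 f hf.1]

end WHypergraph

end HTDev
namespace WHypergraph

variable {V : Type*} [Fintype V] [DecidableEq V]

/-- A walk through edges satisfying `P`, recorded as a list of (edge, next vertex) steps. -/
inductive WalkP (H : WHypergraph V) (P : Finset V → Prop) : V → V → List (Finset V × V) → Prop
  | nil (a : V) : WalkP H P a a []
  | cons {a c b : V} {f : Finset V} {L : List (Finset V × V)} :
      f ∈ H.edges → P f → a ∈ f → c ∈ f → WalkP H P c b L → WalkP H P a b ((f, c) :: L)

namespace WalkP

variable {H : WHypergraph V} {P : Finset V → Prop}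

lemma of_rtg {a b : V}
    (h : Relation.ReflTransGen (fun x y => ∃ f ∈ H.edges, P f ∧ x ∈ f ∧ y ∈ f) a b) :
    ∃ L, WalkP H P a b L := by
  induction h with
  | refl => exact ⟨[], .nil a⟩
  | tail _ hstep ih =>
      obtain ⟨L, hL⟩ := ih
      obtain ⟨f, hf, hPf, hx, hy⟩ := hstep
      -- append one step at the end: easier to build by induction on hL
      clear * - hL hf hPf hx hy
      rename_i x y
      induction hL with
      | nil a => exact ⟨[(f, y)], .cons hf hPf hx hy (.nil y)⟩
      | cons hf' hPf' ha' hc' _ ih' =>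
          obtain ⟨L', hL'⟩ := ih' hx
          exact ⟨_, .cons hf' hPf' ha' hc' hL'⟩

lemma append_decomp {a b : V} {L₁ L₂ : List (Finset V × V)}
    (h : WalkP H P a b (L₁ ++ L₂)) : ∃ c, WalkP H P a c L₁ ∧ WalkP H P c b L₂ := by
  induction L₁ generalizing a with
  | nil => exact ⟨a, .nil a, h⟩
  | cons p L₁ ih =>
      cases h with
      | cons hf hPf ha hc htail =>
          obtain ⟨d, h1, h2⟩ := ih htail
          exact ⟨d, .cons hf hPf ha hc h1, h2⟩

lemma append {a c b : V} {L₁ L₂ : List (Finset V × V)}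
    (h1 : WalkP H P a c L₁) (h2 : WalkP H P c b L₂) : WalkP H P a b (L₁ ++ L₂) := by
  induction h1 with
  | nil => exact h2
  | cons hf hPf ha hc _ ih => exact .cons hf hPf ha hc (ih h2)

lemma nil_iff {a b : V} (h : WalkP H P a b []) : a = b := by cases h; rfl

lemma getLast {a b : V} {L : List (Finset V × V)}
    (h : WalkP H P a b L) : (a :: L.map Prod.snd).getLast (by simp) = b := by
  induction h with
  | nil => rfl
  | cons _ _ _ _ htail ih =>
      rw [← ih]
      simp [List.getLast_cons]

lemma step_mem {a b : V} {L : List (Finset V × V)} (h : WalkP H P a b L) (d : V) :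
    ∀ i < L.length, ((a :: L.map Prod.snd).getD i d ∈ (L.getD i (∅, d)).1 ∧
      (a :: L.map Prod.snd).getD (i+1) d ∈ (L.getD i (∅, d)).1 ∧
      (L.getD i (∅, d)).1 ∈ H.edges ∧ P (L.getD i (∅, d)).1) := by
  induction h with
  | nil => intro i hi; simp at hi
  | cons hf hPf ha hc htail ih =>
      intro i hi
      match i with
      | 0 =>
          refine ⟨ha, ?_, hf, hPf⟩
          rcases htail with _ | _
          · exact hc
          · exact hc
      | (n+1) =>
          simp only [List.length_cons] at hi
          have := ih n (by omega)
          simpa using this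

end WalkP

/-- a list that is not nodup contains a repeated element -/
lemma List.exists_dup_decomp {α : Type*} {l : List α} (h : ¬ l.Nodup) :
    ∃ (l₁ l₂ l₃ : List α) (x : α), l = l₁ ++ x :: l₂ ++ x :: l₃ := by
  induction l with
  | nil => simp at h
  | cons a l ih =>
      by_cases ha : a ∈ l
      · obtain ⟨s, t, rfl⟩ := List.append_of_mem ha
        exact ⟨[], s, t, a, by simp⟩
      · have : ¬ l.Nodup := fun hn => h (List.nodup_cons.2 ⟨ha, hn⟩)
        obtain ⟨l₁, l₂, l₃, x, rfl⟩ := ih this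
        exact ⟨a :: l₁, l₂, l₃, x, by simp⟩

/-- split a list of pairs according to a split of its 2nd (or 1st) projections -/
lemma List.map_eq_append_cons_decomp {α β : Type*} (g : α → β) {L : List α} {m₁ m₂ : List β} {x : β}
    (h : L.map g = m₁ ++ x :: m₂) :
    ∃ s p t, L = s ++ p :: t ∧ g p = x ∧ s.map g = m₁ ∧ t.map g = m₂ := by
  induction L generalizing m₁ with
  | nil => simp at h
  | cons a L ih =>
      match m₁ with
      | [] =>
          simp only [List.map_cons, List.nil_append, List.cons.injEq] at h
          exact ⟨[], a, L, by simp, h.1, rfl, h.2⟩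
      | b :: m₁ =>
          simp only [List.map_cons, List.cons_append, List.cons.injEq] at h
          obtain ⟨s, p, t, rfl, hg, hs, ht⟩ := ih h.2
          exact ⟨a :: s, p, t, by simp, hg, by simp [h.1, hs], ht⟩

end WHypergraph
namespace WHypergraph

variable {V : Type*} [Fintype V] [DecidableEq V]

namespace WalkP

variable {H : WHypergraph V} {P : Finset V → Prop}

lemma shorten_vertex {a b : V} {L : List (Finset V × V)} (hw : WalkP H P a b L)
    (hnd : ¬ (a :: L.map Prod.snd).Nodup) :
    ∃ L', L'.length < L.length ∧ WalkP H P a b L' := by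
  obtain ⟨l₁, l₂, l₃, x, hsplit⟩ := List.exists_dup_decomp hnd
  cases l₁ with
  | nil =>
      rw [List.nil_append] at hsplit
      injection hsplit with h1 hmap
      subst h1
      obtain ⟨s, p, t, rfl, hp2, hs, ht⟩ := List.map_eq_append_cons_decomp Prod.snd hmap
      obtain ⟨f₁, y₁⟩ := p
      simp only at hp2; subst hp2
      obtain ⟨c, -, h2⟩ := hw.append_decomp
      cases h2 with
      | cons hf hPf hc hx htail =>
          exact ⟨t, by simp; omega, htail⟩
  | cons a' l₁' =>
      rw [List.cons_append] at hsplit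
      injection hsplit with h1 hmap
      subst h1
      obtain ⟨s, p, t, rfl, hp2, hs, ht⟩ :=
        List.map_eq_append_cons_decomp Prod.snd (m₁ := l₁') (m₂ := l₂ ++ x :: l₃)
          (by simpa using hmap)
      obtain ⟨s', q, t', rfl, hq2, hs', ht'⟩ :=
        List.map_eq_append_cons_decomp Prod.snd (m₁ := l₂) (m₂ := l₃) ht
      obtain ⟨f₁, y₁⟩ := p; obtain ⟨f₂, y₂⟩ := q
      simp only at hp2 hq2
      obtain ⟨c, h1, h2⟩ := hw.append_decomp
      cases h2 with
      | cons hf hPf hc hx htail =>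
          obtain ⟨d, -, h4⟩ := htail.append_decomp
          cases h4 with
          | cons hf' hPf' hd hx' htail' =>
              have hxy : y₂ = y₁ := hq2.trans hp2.symm
              rw [hxy] at htail'
              exact ⟨s ++ (f₁, y₁) :: t', by simp,
                h1.append (.cons hf hPf hc hx htail')⟩

lemma shorten_edge {a b : V} {L : List (Finset V × V)} (hw : WalkP H P a b L)
    (hne : ¬ (L.map Prod.fst).Nodup) :
    ∃ L', L'.length < L.length ∧ WalkP H P a b L' := by
  obtain ⟨l₁, l₂, l₃, x, hsplit⟩ := List.exists_dup_decomp hne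
  obtain ⟨s, p, t, rfl, hp1, hs, ht⟩ :=
    List.map_eq_append_cons_decomp Prod.fst (m₁ := l₁) (m₂ := l₂ ++ x :: l₃)
      (by simpa using hsplit)
  obtain ⟨s', q, t', rfl, hq1, hs', ht'⟩ :=
    List.map_eq_append_cons_decomp Prod.fst (m₁ := l₂) (m₂ := l₃) ht
  obtain ⟨f₁, y₁⟩ := p; obtain ⟨f₂, y₂⟩ := q
  simp only at hp1 hq1
  obtain ⟨c, h1, h2⟩ := hw.append_decomp
  cases h2 with
  | cons hf hPf hc hx htail =>
      obtain ⟨d, -, h4⟩ := htail.append_decomp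
      cases h4 with
      | cons hf' hPf' hd hx' htail' =>
          have hff : f₂ = f₁ := hq1.trans hp1.symm
          rw [hff] at hx'
          exact ⟨s ++ (f₁, y₂) :: t', by simp,
            h1.append (.cons hf hPf hc hx' htail')⟩

lemma toCycle {a b : V} {L : List (Finset V × V)} (hw : WalkP H P a b L)
    (hnd : (a :: L.map Prod.snd).Nodup) (hne : (L.map Prod.fst).Nodup)
    {E : Finset V} (hE : E ∈ H.edges) (hPE : ∀ f, P f → f ≠ E)
    (ha : a ∈ E) (hb : b ∈ E) (hab : a ≠ b) : H.HasCycle := by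
  have hLne : L ≠ [] := by rintro rfl; exact hab hw.nil_iff
  have hlen : 1 ≤ L.length := by
    cases L with | nil => simp at hLne | cons _ _ => simp
  set VL := a :: L.map Prod.snd with hVL
  have hVLlen : VL.length = L.length + 1 := by simp [hVL]
  refine ⟨L.length + 1, fun i => VL.getD i a,
    fun i => if i < L.length then (L.getD i (∅, a)).1 else E, ?_, ?_, ?_, ?_, ?_⟩
  · omega
  · -- vertex injectivity
    intro i hi j hj hvij
    have hvij : VL.getD i a = VL.getD j a := hvij
    have h1 : VL.getD i a = VL.get ⟨i, by omega⟩ := List.getD_eq_get _ _ ⟨i, by omega⟩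
    have h2 : VL.getD j a = VL.get ⟨j, by omega⟩ := List.getD_eq_get _ _ ⟨j, by omega⟩
    rw [h1, h2] at hvij
    have := (List.nodup_iff_injective_get.1 hnd) hvij
    exact congrArg Fin.val this
  · -- edge injectivity
    intro i hi j hj heij
    have heij : (if i < L.length then (L.getD i (∅, a)).1 else E)
        = (if j < L.length then (L.getD j (∅, a)).1 else E) := heij
    have key : ∀ m, ∀ hm : m < L.length,
        (L.getD m (∅, a)).1 = (L.map Prod.fst).get ⟨m, by simpa using hm⟩ := by
      intro m hm
      rw [List.getD_eq_getElem _ _ hm]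
      simp [List.getElem_map]
    by_cases hi' : i < L.length <;> by_cases hj' : j < L.length
    · simp only [if_pos hi', if_pos hj', key i hi', key j hj'] at heij
      exact congrArg Fin.val ((List.nodup_iff_injective_get.1 hne) heij)
    · exfalso
      have hj'' : j = L.length := by omega
      simp only [if_pos hi', if_neg hj'] at heij
      have hstep := hw.step_mem a i hi'
      exact hPE _ hstep.2.2.2 (heij)
    · exfalso
      have hi'' : i = L.length := by omega
      simp only [if_neg hi', if_pos hj'] at heij
      have hstep := hw.step_mem a j hj'
      exact hPE _ hstep.2.2.2 (heij.symm)
    · omega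
  · intro i hi
    dsimp only
    by_cases hi' : i < L.length
    · simp only [if_pos hi']
      exact (hw.step_mem a i hi').2.2.1
    · simp only [if_neg hi']; exact hE
  · intro i hi
    dsimp only
    by_cases hi' : i < L.length
    · simp only [if_pos hi']
      have hstep := hw.step_mem a i hi'
      have hmod : (i + 1) % (L.length + 1) = i + 1 := Nat.mod_eq_of_lt (by omega)
      rw [hmod]
      exact ⟨hstep.1, hstep.2.1⟩
    · have hi'' : i = L.length := by omega
      subst hi''
      simp only [if_neg hi']
      constructor
      · have : VL.getD L.length a = VL.getLast (by simp [hVL]) := by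
          rw [List.getLast_eq_getElem]
          rw [List.getD_eq_getElem _ _ (by omega)]
          congr 1
          simp [hVLlen]
        rw [this, hw.getLast]
        exact hb
      · have hmod : (L.length + 1) % (L.length + 1) = 0 := Nat.mod_self _
        rw [hmod]
        exact ha

end WalkP

/-- Master lemma: in an acyclic hypergraph, two distinct vertices of an edge `E`
cannot be joined by a walk avoiding `E`. -/
lemma not_walkP {H : WHypergraph V} (hnc : ¬ H.HasCycle) {P : Finset V → Prop}
    {E : Finset V} (hE : E ∈ H.edges) (hPE : ∀ f, P f → f ≠ E)
    {a b : V} (ha : a ∈ E) (hb : b ∈ E) (hab : a ≠ b) :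
    ∀ L, ¬ WalkP H P a b L := by
  have : ∀ (n : ℕ) (L : List (Finset V × V)), L.length = n → ¬ WalkP H P a b L := by
    intro n
    induction n using Nat.strong_induction_on with
    | _ n ih =>
        intro L hL hw
        by_cases hnd : (a :: L.map Prod.snd).Nodup
        · by_cases hne : (L.map Prod.fst).Nodup
          · exact hnc (hw.toCycle hnd hne hE hPE ha hb hab)
          · obtain ⟨L', hlt, hw'⟩ := hw.shorten_edge hne
            exact ih L'.length (by omega) L' rfl hw'
        · obtain ⟨L', hlt, hw'⟩ := hw.shorten_vertex hnd
          exact ih L'.length (by omega) L' rfl hw'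
  exact fun L => this L.length L rfl

/-- Master lemma, relational form. -/
lemma not_rtg_avoid {H : WHypergraph V} (hnc : ¬ H.HasCycle) {P : Finset V → Prop}
    {E : Finset V} (hE : E ∈ H.edges) (hPE : ∀ f, P f → f ≠ E)
    {a b : V} (ha : a ∈ E) (hb : b ∈ E) (hab : a ≠ b)
    (h : Relation.ReflTransGen (fun x y => ∃ f ∈ H.edges, P f ∧ x ∈ f ∧ y ∈ f) a b) : False := by
  obtain ⟨L, hL⟩ := WalkP.of_rtg h
  exact not_walkP hnc hE hPE ha hb hab L hL

end WHypergraph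
namespace WHypergraph

variable {V : Type*} [Fintype V] [DecidableEq V]

lemma mem_mVerts {M : Finset (Finset V)} {v : V} : v ∈ mVerts M ↔ ∃ e ∈ M, v ∈ e := by
  simp [mVerts]

lemma mVerts_union {M N : Finset (Finset V)} : mVerts (M ∪ N) = mVerts M ∪ mVerts N := by
  ext v; simp [mem_mVerts, Finset.mem_union, or_and_right, exists_or]

lemma mVerts_subset {H : WHypergraph V} {M : Finset (Finset V)} (hM : M ∈ H.matchings)
    (hU : ∀ e ∈ H.edges, e ⊆ H.verts) : mVerts M ⊆ H.verts := by
  intro v hv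
  obtain ⟨e, he, hve⟩ := mem_mVerts.1 hv
  exact hU e ((mem_matchings.1 hM).1 he) hve

lemma mVerts_insert {e : Finset V} {M : Finset (Finset V)} :
    mVerts (insert e M) = e ∪ mVerts M := by
  ext v; simp [mem_mVerts]

lemma psi_of_edges_empty {H : WHypergraph V} (h : H.edges = ∅) (lam : ℂ) :
    psi H lam = lam ^ H.verts.card := by
  have : H.matchings = {∅} := by
    ext M
    simp only [mem_matchings, Finset.mem_singleton]
    constructor
    · rintro ⟨hM, -⟩
      exact Finset.subset_empty.1 (h ▸ hM)
    · rintro rfl; simp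
  simp [psi, this, mVerts]

/-- Matchings of a hypergraph with the same vertex set and fewer edges inject. -/
lemma psi_edge {H : WHypergraph V} {e : Finset V} (he : e ∈ H.edges) (hne : e.Nonempty)
    (hU : ∀ f ∈ H.edges, f ⊆ H.verts) (lam : ℂ) :
    psi H lam = psi ⟨H.verts, H.edges.erase e⟩ lam
      - psi (H.induce (H.verts \ e)) lam := by
  classical
  unfold psi
  rw [← Finset.sum_filter_add_sum_filter_not H.matchings (fun M => e ∈ M)]
  have h1 : ∑ M ∈ H.matchings.filter (fun M => ¬ e ∈ M),
      (-1:ℂ) ^ M.card * lam ^ (H.verts \ mVerts M).card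
      = ∑ M ∈ (WHypergraph.mk H.verts (H.edges.erase e)).matchings,
        (-1:ℂ) ^ M.card * lam ^ (H.verts \ mVerts M).card := by
    apply Finset.sum_congr _ (fun _ _ => rfl)
    ext M
    simp only [Finset.mem_filter, mem_matchings]
    constructor
    · rintro ⟨⟨hsub, hdisj⟩, hnot⟩
      exact ⟨fun f hf => Finset.mem_erase.2 ⟨fun h => hnot (h ▸ hf), hsub hf⟩, hdisj⟩
    · rintro ⟨hsub, hdisj⟩
      refine ⟨⟨fun f hf => (Finset.mem_erase.1 (hsub hf)).2, hdisj⟩, fun hmem => ?_⟩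
      exact (Finset.mem_erase.1 (hsub hmem)).1 rfl
  have h2 : ∑ M ∈ H.matchings.filter (fun M => e ∈ M),
      (-1:ℂ) ^ M.card * lam ^ (H.verts \ mVerts M).card
      = - psi (H.induce (H.verts \ e)) lam := by
    rw [psi, ← Finset.sum_neg_distrib]
    apply Finset.sum_nbij' (fun M => M.erase e) (fun M => insert e M)
    · -- maps to
      intro M hM
      rw [Finset.mem_filter] at hM
      obtain ⟨hM, heM⟩ := hM
      rw [mem_matchings] at hM
      rw [mem_matchings]
      constructor
      · intro f hf
        rw [Finset.mem_erase] at hf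
        simp only [edges_induce, Finset.mem_filter]
        refine ⟨hM.1 hf.2, ?_⟩
        intro v hv
        rw [Finset.mem_sdiff]
        refine ⟨hU f (hM.1 hf.2) hv, fun hve => ?_⟩
        exact (Finset.disjoint_left.1 (hM.2 f hf.2 e heM hf.1)) hv hve
      · intro f hf g hg
        exact hM.2 f (Finset.mem_of_mem_erase hf) g (Finset.mem_of_mem_erase hg)
    · -- inverse maps to
      intro M hM
      rw [mem_matchings] at hM
      rw [Finset.mem_filter, mem_matchings]
      have hMe : ∀ f ∈ M, f ∈ H.edges ∧ f ⊆ H.verts \ e := by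
        intro f hf
        have := hM.1 hf
        simp only [edges_induce, Finset.mem_filter] at this
        exact this
      refine ⟨⟨?_, ?_⟩, Finset.mem_insert_self e M⟩
      · intro f hf
        rcases Finset.mem_insert.1 hf with rfl | hf
        · exact he
        · exact (hMe f hf).1
      · intro f hf g hg hfg
        have hf' := Finset.mem_insert.1 hf
        have hg' := Finset.mem_insert.1 hg
        by_cases hfe : f = e
        · by_cases hge : g = e
          · exact absurd (hfe.trans hge.symm) hfg
          · have hgM : g ∈ M := hg'.resolve_left hge
            subst hfe
            exact Finset.disjoint_left.2 fun v hv hvg =>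
              (Finset.mem_sdiff.1 ((hMe g hgM).2 hvg)).2 hv
        · have hfM : f ∈ M := hf'.resolve_left hfe
          by_cases hge : g = e
          · exact Finset.disjoint_left.2 fun v hvf hvg =>
              (Finset.mem_sdiff.1 ((hMe f hfM).2 hvf)).2 (hge ▸ hvg)
          · exact hM.2 f hfM g (hg'.resolve_left hge) hfg
    · -- left inverse
      intro M hM
      rw [Finset.mem_filter] at hM
      exact Finset.insert_erase hM.2
    · -- right inverse
      intro M hM
      rw [mem_matchings] at hM
      apply Finset.erase_insert
      intro heM
      have := hM.1 heM
      simp only [edges_induce, Finset.mem_filter] at this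
      obtain ⟨v, hv⟩ := hne
      exact (Finset.mem_sdiff.1 (this.2 hv)).2 hv
    · -- value
      intro M hM
      rw [Finset.mem_filter] at hM
      have hcard : M.card = (M.erase e).card + 1 := by
        rw [Finset.card_erase_of_mem hM.2]
        have : 1 ≤ M.card := Finset.card_pos.2 ⟨e, hM.2⟩
        omega
      have hmv : H.verts \ mVerts M = (H.verts \ e) \ mVerts (M.erase e) := by
        have : mVerts M = e ∪ mVerts (M.erase e) := by
          conv_lhs => rw [← Finset.insert_erase hM.2]
          exact mVerts_insert
        rw [this, Finset.sdiff_union_distrib]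
        ext v
        simp only [Finset.mem_inter, Finset.mem_sdiff]
        tauto
      rw [hcard, hmv, pow_succ]
      simp only [verts_induce]
      ring
  rw [h1, h2]
  unfold psi
  rw [sub_eq_add_neg, add_comm]

end WHypergraph
namespace WHypergraph

variable {V : Type*} [Fintype V] [DecidableEq V]

lemma psi_split {H : WHypergraph V} {A B : Finset V} (hd : Disjoint A B)
    (hV : H.verts = A ∪ B) (hE : ∀ e ∈ H.edges, e ⊆ A ∨ e ⊆ B)
    (hnil : ∀ e ∈ H.edges, e.Nonempty) (lam : ℂ) :
    psi H lam = psi (H.induce A) lam * psi (H.induce B) lam := by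
  classical
  have hmvA : ∀ M : Finset (Finset V), M ∈ (H.induce A).matchings → mVerts M ⊆ A := by
    intro M hM
    intro v hv
    obtain ⟨f, hf, hvf⟩ := mem_mVerts.1 hv
    have := (mem_matchings.1 hM).1 hf
    simp only [edges_induce, Finset.mem_filter] at this
    exact this.2 hvf
  have hmvB : ∀ M : Finset (Finset V), M ∈ (H.induce B).matchings → mVerts M ⊆ B := by
    intro M hM
    intro v hv
    obtain ⟨f, hf, hvf⟩ := mem_mVerts.1 hv
    have := (mem_matchings.1 hM).1 hf
    simp only [edges_induce, Finset.mem_filter] at this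
    exact this.2 hvf
  unfold psi
  rw [Finset.sum_mul_sum, ← Finset.sum_product']
  apply Finset.sum_nbij' (fun M => (M.filter (fun e => e ⊆ A), M.filter (fun e => e ⊆ B)))
    (fun p => p.1 ∪ p.2)
  · -- maps to
    intro M hM
    rw [mem_matchings] at hM
    rw [Finset.mem_product]
    constructor <;> rw [mem_matchings] <;> constructor
    · intro f hf
      rw [Finset.mem_filter] at hf
      simp only [edges_induce, Finset.mem_filter]
      exact ⟨hM.1 hf.1, hf.2⟩
    · intro f hf g hg
      rw [Finset.mem_filter] at hf hg
      exact hM.2 f hf.1 g hg.1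
    · intro f hf
      rw [Finset.mem_filter] at hf
      simp only [edges_induce, Finset.mem_filter]
      exact ⟨hM.1 hf.1, hf.2⟩
    · intro f hf g hg
      rw [Finset.mem_filter] at hf hg
      exact hM.2 f hf.1 g hg.1
  · -- inverse maps to
    intro p hp
    rw [Finset.mem_product] at hp
    obtain ⟨h1, h2⟩ := hp
    rw [mem_matchings] at h1 h2 ⊢
    constructor
    · intro f hf
      rcases Finset.mem_union.1 hf with hf | hf
      · have := h1.1 hf; simp only [edges_induce, Finset.mem_filter] at this; exact this.1
      · have := h2.1 hf; simp only [edges_induce, Finset.mem_filter] at this; exact this.1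
    · intro f hf g hg hfg
      have hfA : f ∈ p.1 → f ⊆ A := fun h => by
        have := h1.1 h; simp only [edges_induce, Finset.mem_filter] at this; exact this.2
      have hfB : f ∈ p.2 → f ⊆ B := fun h => by
        have := h2.1 h; simp only [edges_induce, Finset.mem_filter] at this; exact this.2
      have hgA : g ∈ p.1 → g ⊆ A := fun h => by
        have := h1.1 h; simp only [edges_induce, Finset.mem_filter] at this; exact this.2
      have hgB : g ∈ p.2 → g ⊆ B := fun h => by
        have := h2.1 h; simp only [edges_induce, Finset.mem_filter] at this; exact this.2
      rcases Finset.mem_union.1 hf with hf | hf <;> rcases Finset.mem_union.1 hg with hg | hg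
      · exact h1.2 f hf g hg hfg
      · exact hd.mono (hfA hf) (hgB hg)
      · exact (hd.mono (hgA hg) (hfB hf)).symm
      · exact h2.2 f hf g hg hfg
  · -- left inverse
    intro M hM
    rw [mem_matchings] at hM
    ext f
    simp only [Finset.mem_union, Finset.mem_filter]
    constructor
    · rintro (⟨h, -⟩ | ⟨h, -⟩) <;> exact h
    · intro hf
      rcases hE f (hM.1 hf) with h | h
      · exact Or.inl ⟨hf, h⟩
      · exact Or.inr ⟨hf, h⟩
  · -- right inverse
    intro p hp
    rw [Finset.mem_product] at hp
    obtain ⟨h1, h2⟩ := hp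
    have e1 : ∀ f ∈ p.1, f ∈ H.edges ∧ f ⊆ A := by
      intro f hf; have := (mem_matchings.1 h1).1 hf
      simp only [edges_induce, Finset.mem_filter] at this; exact this
    have e2 : ∀ f ∈ p.2, f ∈ H.edges ∧ f ⊆ B := by
      intro f hf; have := (mem_matchings.1 h2).1 hf
      simp only [edges_induce, Finset.mem_filter] at this; exact this
    have key : ∀ f, ¬ (f ∈ H.edges ∧ f ⊆ A ∧ f ⊆ B) := by
      rintro f ⟨hfe, hfA, hfB⟩
      obtain ⟨v, hv⟩ := hnil f hfe
      exact Finset.disjoint_left.1 hd (hfA hv) (hfB hv)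
    have : (p.1 ∪ p.2).filter (fun e => e ⊆ A) = p.1 := by
      ext f
      simp only [Finset.mem_filter, Finset.mem_union]
      constructor
      · rintro ⟨hf | hf, hA⟩
        · exact hf
        · exact absurd ⟨(e2 f hf).1, hA, (e2 f hf).2⟩ (key f)
      · intro hf; exact ⟨Or.inl hf, (e1 f hf).2⟩
    have that : (p.1 ∪ p.2).filter (fun e => e ⊆ B) = p.2 := by
      ext f
      simp only [Finset.mem_filter, Finset.mem_union]
      constructor
      · rintro ⟨hf | hf, hB⟩
        · exact absurd ⟨(e1 f hf).1, (e1 f hf).2, hB⟩ (key f)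
        · exact hf
      · intro hf; exact ⟨Or.inr hf, (e2 f hf).2⟩
    rw [Prod.ext_iff]
    exact ⟨this, that⟩
  · -- values
    intro M hM
    rw [mem_matchings] at hM
    set MA := M.filter (fun e => e ⊆ A) with hMA
    set MB := M.filter (fun e => e ⊆ B) with hMB
    have hMun : M = MA ∪ MB := by
      ext f
      simp only [hMA, hMB, Finset.mem_union, Finset.mem_filter]
      constructor
      · intro hf
        rcases hE f (hM.1 hf) with h | h
        · exact Or.inl ⟨hf, h⟩
        · exact Or.inr ⟨hf, h⟩
      · rintro (⟨h, -⟩ | ⟨h, -⟩) <;> exact h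
    have hdisj : Disjoint MA MB := by
      rw [Finset.disjoint_left]
      intro f hfA hfB
      rw [hMA, Finset.mem_filter] at hfA
      rw [hMB, Finset.mem_filter] at hfB
      obtain ⟨v, hv⟩ := hnil f (hM.1 hfA.1)
      exact Finset.disjoint_left.1 hd (hfA.2 hv) (hfB.2 hv)
    have hcard : M.card = MA.card + MB.card := by
      rw [hMun]; exact Finset.card_union_of_disjoint hdisj
    have hmva : mVerts MA ⊆ A := by
      intro v hv
      obtain ⟨f, hf, hvf⟩ := mem_mVerts.1 hv
      exact (Finset.mem_filter.1 hf).2 hvf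
    have hmvb : mVerts MB ⊆ B := by
      intro v hv
      obtain ⟨f, hf, hvf⟩ := mem_mVerts.1 hv
      exact (Finset.mem_filter.1 hf).2 hvf
    have hsd : H.verts \ mVerts M = (A \ mVerts MA) ∪ (B \ mVerts MB) := by
      rw [hV, hMun, mVerts_union]
      ext v
      simp only [Finset.mem_sdiff, Finset.mem_union, not_or]
      constructor
      · rintro ⟨hv | hv, h2, h3⟩
        · exact Or.inl ⟨hv, h2⟩
        · exact Or.inr ⟨hv, h3⟩
      · rintro (⟨hv, h2⟩ | ⟨hv, h3⟩)
        · exact ⟨Or.inl hv, h2, fun hmb => Finset.disjoint_left.1 hd hv (hmvb hmb)⟩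
        · exact ⟨Or.inr hv, fun hma => Finset.disjoint_left.1 hd (hmva hma) hv, h3⟩
    have hsdcard : (H.verts \ mVerts M).card = (A \ mVerts MA).card + (B \ mVerts MB).card := by
      rw [hsd]
      exact Finset.card_union_of_disjoint
        (hd.mono (Finset.sdiff_subset) (Finset.sdiff_subset))
    rw [hcard, hsdcard, pow_add, pow_add]
    simp only [verts_induce]
    ring

lemma psi_iUnion {H : WHypergraph V} {ι : Type*} [DecidableEq ι] {s : Finset ι}
    {A : ι → Finset V}
    (hd : ∀ i ∈ s, ∀ j ∈ s, i ≠ j → Disjoint (A i) (A j))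
    (hV : H.verts = s.biUnion A)
    (hE : ∀ e ∈ H.edges, ∃ i ∈ s, e ⊆ A i)
    (hnil : ∀ e ∈ H.edges, e.Nonempty) (lam : ℂ) :
    psi H lam = ∏ i ∈ s, psi (H.induce (A i)) lam := by
  classical
  induction s using Finset.induction_on generalizing H with
  | empty =>
      have hE0 : H.edges = ∅ := by
        rw [Finset.eq_empty_iff_forall_notMem]
        intro e he
        obtain ⟨i, hi, -⟩ := hE e he
        simp at hi
      rw [psi_of_edges_empty hE0, hV]
      simp
  | insert a s hx ih =>
      have hsub : s.biUnion A ⊆ H.verts := by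
        rw [hV]
        exact Finset.biUnion_subset_biUnion_of_subset_left A (Finset.subset_insert a s)
      have hsplit := psi_split (A := A a) (B := s.biUnion A)
        (H := H) ?_ ?_ ?_ hnil lam
      · rw [hsplit, Finset.prod_insert hx]
        congr 1
        rw [ih (H := H.induce (s.biUnion A))]
        · apply Finset.prod_congr rfl
          intro i hi
          rw [induce_induce]
          exact Finset.subset_biUnion_of_mem A hi
        · intro i hi j hj hij
          exact hd i (Finset.mem_insert_of_mem hi) j (Finset.mem_insert_of_mem hj) hij
        · rfl
        · intro e he
          simp only [edges_induce, Finset.mem_filter] at he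
          obtain ⟨i, hi, hie⟩ := hE e he.1
          rcases Finset.mem_insert.1 hi with rfl | hi
          · exfalso
            obtain ⟨v, hv⟩ := hnil e he.1
            have hvb := he.2 hv
            obtain ⟨j, hj, hvj⟩ := Finset.mem_biUnion.1 hvb
            exact Finset.disjoint_left.1
              (hd i (Finset.mem_insert_self _ _) j (Finset.mem_insert_of_mem hj)
                (fun h => hx (h ▸ hj))) (hie hv) hvj
          · exact ⟨i, hi, hie⟩
        · intro e he
          simp only [edges_induce, Finset.mem_filter] at he
          exact hnil e he.1
      · -- disjointness
        rw [Finset.disjoint_right]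
        intro v hv hva
        obtain ⟨j, hj, hvj⟩ := Finset.mem_biUnion.1 hv
        exact Finset.disjoint_left.1
          (hd a (Finset.mem_insert_self _ _) j (Finset.mem_insert_of_mem hj)
            (fun h => hx (h ▸ hj))) hva hvj
      · rw [hV, Finset.biUnion_insert]
      · intro e he
        obtain ⟨i, hi, hie⟩ := hE e he
        rcases Finset.mem_insert.1 hi with rfl | hi
        · exact Or.inl hie
        · exact Or.inr (hie.trans (Finset.subset_biUnion_of_mem A hi))

end WHypergraph
namespace WHypergraph

variable {V : Type*} [Fintype V] [DecidableEq V]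

/-- One step through an edge satisfying `P`. -/
def AdjP (H : WHypergraph V) (P : Finset V → Prop) (x y : V) : Prop :=
  ∃ f ∈ H.edges, P f ∧ x ∈ f ∧ y ∈ f

lemma adjP_symm (H : WHypergraph V) (P : Finset V → Prop) : Symmetric (H.AdjP P) := by
  rintro x y ⟨f, hf, hPf, hx, hy⟩; exact ⟨f, hf, hPf, hy, hx⟩

/-- The set of vertices reachable from `a` through edges satisfying `P`. -/
noncomputable def comp (H : WHypergraph V) (P : Finset V → Prop) (a : V) : Finset V :=
  H.verts.filter (fun v => Relation.ReflTransGen (H.AdjP P) a v)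

lemma mem_comp {H : WHypergraph V} {P : Finset V → Prop} {a v : V} :
    v ∈ comp H P a ↔ v ∈ H.verts ∧ Relation.ReflTransGen (H.AdjP P) a v :=
  Finset.mem_filter

lemma mem_comp_self {H : WHypergraph V} {P : Finset V → Prop} {a : V} (ha : a ∈ H.verts) :
    a ∈ comp H P a := mem_comp.2 ⟨ha, .refl⟩

lemma comp_subset {H : WHypergraph V} {P : Finset V → Prop} {a : V} :
    comp H P a ⊆ H.verts := Finset.filter_subset _ _

lemma comp_closure {H : WHypergraph V} {P : Finset V → Prop} {a : V}
    (hU : ∀ f ∈ H.edges, f ⊆ H.verts) {f : Finset V} (hf : f ∈ H.edges) (hPf : P f)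
    {x : V} (hx : x ∈ f) (hxc : x ∈ comp H P a) : f ⊆ comp H P a := by
  intro y hy
  exact mem_comp.2 ⟨hU f hf hy, (mem_comp.1 hxc).2.tail ⟨f, hf, hPf, hx, hy⟩⟩

lemma comp_connected {H : WHypergraph V} {P : Finset V → Prop} {a : V}
    (hU : ∀ f ∈ H.edges, f ⊆ H.verts) (ha : a ∈ H.verts) :
    (H.induce (comp H P a)).Connected := by
  have key : ∀ v, Relation.ReflTransGen (H.AdjP P) a v → v ∈ H.verts →
      Relation.ReflTransGen (H.induce (comp H P a)).Adj a v := by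
    intro v hv hvV
    induction hv with
    | refl => exact .refl
    | tail hax hstep ih =>
        rename_i x y
        obtain ⟨f, hf, hPf, hx, hy⟩ := hstep
        have hxV : x ∈ H.verts := hU f hf hx
        have hxc : x ∈ comp H P a := mem_comp.2 ⟨hxV, hax⟩
        have hfc : f ⊆ comp H P a := comp_closure hU hf hPf hx hxc
        refine (ih hxV).tail ?_
        exact ⟨f, by simp only [edges_induce, Finset.mem_filter]; exact ⟨hf, hfc⟩, hx, hy⟩
  apply connected_of_forall (r := a) (mem_comp_self ha)
  intro v hv
  rw [verts_induce, mem_comp] at hv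
  have hsymm : Symmetric (H.induce (comp H P a)).Adj := by
    rintro x y ⟨f, hf, hx, hy⟩; exact ⟨f, hf, hy, hx⟩
  exact (@Relation.ReflTransGen.stdSymm _ _ ⟨hsymm⟩).symm _ _ (key v hv.2 hv.1)

lemma reach_edge {H : WHypergraph V} {e : Finset V} {v w : V} (hw : w ∈ e)
    (h : Relation.ReflTransGen H.Adj v w) :
    ∃ u ∈ e, Relation.ReflTransGen (H.AdjP (fun f => f ≠ e)) v u := by
  induction h using Relation.ReflTransGen.head_induction_on with
  | refl => exact ⟨w, hw, .refl⟩
  | head hstep h ih =>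
      rename_i x c
      obtain ⟨g, hg, hxg, hcg⟩ := hstep
      by_cases hge : g = e
      · exact ⟨x, hge ▸ hxg, .refl⟩
      · obtain ⟨u, hu, hru⟩ := ih
        exact ⟨u, hu, .head ⟨g, hg, hge, hxg, hcg⟩ hru⟩

section Partition

variable {H : WHypergraph V} {e : Finset V}

lemma part_disjoint (hnc : ¬ H.HasCycle) (he : e ∈ H.edges) :
    ∀ u ∈ e, ∀ u' ∈ e, u ≠ u' →
      Disjoint (comp H (fun f => f ≠ e) u) (comp H (fun f => f ≠ e) u') := by
  intro u hu u' hu' hne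
  rw [Finset.disjoint_left]
  intro v hv hv'
  have h1 := (mem_comp.1 hv).2
  have h2 := (mem_comp.1 hv').2
  have huu' : Relation.ReflTransGen (H.AdjP (fun f => f ≠ e)) u u' :=
    h1.trans ((@Relation.ReflTransGen.stdSymm _ _ ⟨adjP_symm H _⟩).symm _ _ h2)
  exact not_rtg_avoid hnc he (fun f hf => hf) hu hu' hne huu'

lemma part_cover (hc : H.Connected) (hU : ∀ f ∈ H.edges, f ⊆ H.verts)
    (he : e ∈ H.edges) (hene : e.Nonempty) :
    H.verts = e.biUnion (fun u => comp H (fun f => f ≠ e) u) := by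
  apply Finset.Subset.antisymm
  · intro v hv
    obtain ⟨w, hw⟩ := hene
    have hrtg := hc v hv w (hU e he hw)
    obtain ⟨u, hu, hru⟩ := reach_edge hw hrtg
    exact Finset.mem_biUnion.2 ⟨u, hu,
      mem_comp.2 ⟨hv, (@Relation.ReflTransGen.stdSymm _ _ ⟨adjP_symm H _⟩).symm _ _ hru⟩⟩
  · intro v hv
    obtain ⟨u, -, hvu⟩ := Finset.mem_biUnion.1 hv
    exact comp_subset hvu

lemma part_edge (hc : H.Connected) (hU : ∀ f ∈ H.edges, f ⊆ H.verts)
    (he : e ∈ H.edges) (hene : e.Nonempty) {f : Finset V} (hf : f ∈ H.edges) (hfe : f ≠ e)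
    (hfnil : f.Nonempty) : ∃ u ∈ e, f ⊆ comp H (fun g => g ≠ e) u := by
  obtain ⟨x, hx⟩ := hfnil
  have hxV : x ∈ H.verts := hU f hf hx
  rw [part_cover hc hU he hene] at hxV
  obtain ⟨u, hu, hxu⟩ := Finset.mem_biUnion.1 hxV
  exact ⟨u, hu, comp_closure hU hf hfe hx hxu⟩

lemma part_inter (hnc : ¬ H.HasCycle) (hU : ∀ f ∈ H.edges, f ⊆ H.verts)
    (he : e ∈ H.edges) {u : V} (hu : u ∈ e) :
    e ∩ comp H (fun f => f ≠ e) u = {u} := by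
  ext v
  simp only [Finset.mem_inter, Finset.mem_singleton]
  constructor
  · rintro ⟨hve, hvc⟩
    by_contra hvu
    have hvc' : v ∈ comp H (fun f => f ≠ e) v := mem_comp_self (hU e he hve)
    exact Finset.disjoint_left.1 (part_disjoint hnc he u hu v hve (fun h => hvu h.symm))
      hvc hvc'
  · rintro rfl
    exact ⟨hu, mem_comp_self (hU e he hu)⟩

lemma part_not_subset (hnc : ¬ H.HasCycle) (hU : ∀ f ∈ H.edges, f ⊆ H.verts)
    (he : e ∈ H.edges) (hcard : 2 ≤ e.card) {u : V} (hu : u ∈ e) :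
    ¬ e ⊆ comp H (fun f => f ≠ e) u := by
  intro hsub
  have : e ∩ comp H (fun f => f ≠ e) u = e := Finset.inter_eq_left.2 hsub
  rw [part_inter hnc hU he hu] at this
  have := congrArg Finset.card this
  simp at this
  omega

lemma part_hypertree {k : ℕ} (hT : H.IsHypertree k) (he : e ∈ H.edges) {u : V} (hu : u ∈ e) :
    (H.induce (comp H (fun f => f ≠ e) u)).IsHypertree k := by
  obtain ⟨hne, hUni, hc, hnc⟩ := hT
  exact ⟨⟨u, mem_comp_self (hUni.1 e he hu)⟩, isUniform_induce hUni _,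
    comp_connected hUni.1 (hUni.1 e he hu), noCycle_induce hnc _⟩

lemma part_edges_lt {k : ℕ} (hT : H.IsHypertree k) (hk : 2 ≤ k) (he : e ∈ H.edges)
    {u : V} (hu : u ∈ e) :
    (H.induce (comp H (fun f => f ≠ e) u)).edges.card < H.edges.card := by
  obtain ⟨hne, hUni, hc, hnc⟩ := hT
  apply Finset.card_lt_card
  rw [Finset.ssubset_iff_of_subset (by simp only [edges_induce]; exact Finset.filter_subset _ _)]
  refine ⟨e, he, ?_⟩
  simp only [edges_induce, Finset.mem_filter, not_and]
  intro _
  exact part_not_subset hnc hUni.1 he (by rw [hUni.2 e he]; omega) hu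

end Partition

end WHypergraph
namespace WHypergraph

variable {V : Type*} [Fintype V] [DecidableEq V]

section StarHelpers

variable {H : WHypergraph V} {k : ℕ} {e : Finset V}

/-- edges through `u` inside the branch `A u`. -/
lemma filter_edges_at (hT : H.IsHypertree k) (hk : 3 ≤ k) (he : e ∈ H.edges)
    {u : V} (hue : u ∈ e) :
    H.edges.filter (fun f => u ∈ f)
      = insert e ((H.induce (comp H (fun f => f ≠ e) u)).edges.filter (fun f => u ∈ f)) := by
  obtain ⟨hne, hUni, hc, hnc⟩ := hT
  have hnil : ∀ f ∈ H.edges, f.Nonempty := fun f hf =>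
    Finset.card_pos.1 (by rw [hUni.2 f hf]; omega)
  ext f
  simp only [Finset.mem_filter, Finset.mem_insert, edges_induce]
  constructor
  · rintro ⟨hf, huf⟩
    by_cases hfe : f = e
    · exact Or.inl hfe
    · refine Or.inr ⟨⟨hf, ?_⟩, huf⟩
      obtain ⟨w, hw, hfw⟩ := part_edge hc hUni.1 he (hnil e he) hf hfe (hnil f hf)
      have huw : u ∈ comp H (fun g => g ≠ e) w := hfw huf
      by_cases hwu : w = u
      · exact hwu ▸ hfw
      · exact absurd (mem_comp_self (hUni.1 e he hue))
          (Finset.disjoint_left.1 (part_disjoint hnc he w hw u hue hwu) huw)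
  · rintro (rfl | ⟨⟨hf, -⟩, huf⟩)
    · exact ⟨he, hue⟩
    · exact ⟨hf, huf⟩

lemma locSum_split (hT : H.IsHypertree k) (hk : 3 ≤ k) (he : e ∈ H.edges)
    {u : V} (hue : u ∈ e) (y : V → ℂ) :
    locSum H y u = (∏ w ∈ e.erase u, y w)
      + locSum (H.induce (comp H (fun f => f ≠ e) u)) y u := by
  obtain ⟨hne, hUni, hc, hnc⟩ := id hT
  unfold locSum
  rw [filter_edges_at hT hk he hue, Finset.sum_insert]
  simp only [edges_induce, Finset.mem_filter, not_and]
  intro h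
  exact absurd h.2 (part_not_subset hnc hUni.1 he (by rw [hUni.2 e he]; omega) hue)

lemma locSum_branch (hT : H.IsHypertree k) (hk : 3 ≤ k) (he : e ∈ H.edges)
    {u : V} (hue : u ∈ e) {v : V} (hv : v ∈ comp H (fun f => f ≠ e) u) (hvu : v ≠ u)
    (y : V → ℂ) :
    locSum (H.induce (comp H (fun f => f ≠ e) u)) y v = locSum H y v := by
  obtain ⟨hne, hUni, hc, hnc⟩ := hT
  have hnil : ∀ f ∈ H.edges, f.Nonempty := fun f hf =>
    Finset.card_pos.1 (by rw [hUni.2 f hf]; omega)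
  unfold locSum
  apply Finset.sum_congr _ (fun _ _ => rfl)
  ext f
  simp only [Finset.mem_filter, edges_induce]
  constructor
  · rintro ⟨⟨hf, -⟩, hvf⟩
    exact ⟨hf, hvf⟩
  · rintro ⟨hf, hvf⟩
    refine ⟨⟨hf, ?_⟩, hvf⟩
    have hfe : f ≠ e := by
      rintro rfl
      have : v ∈ f ∩ comp H (fun g => g ≠ f) u := Finset.mem_inter.2 ⟨hvf, hv⟩
      rw [part_inter hnc hUni.1 hf hue] at this
      exact hvu (Finset.mem_singleton.1 this)
    obtain ⟨w, hw, hfw⟩ := part_edge hc hUni.1 he (hnil e he) hf hfe (hnil f hf)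
    by_cases hwu : w = u
    · exact hwu ▸ hfw
    · exact absurd hv
        (Finset.disjoint_left.1 (part_disjoint hnc he w hw u hue hwu) (hfw hvf))

lemma psi_decomp (hT : H.IsHypertree k) (hk : 3 ≤ k) (he : e ∈ H.edges) (lam : ℂ) :
    psi H lam = (∏ u ∈ e, psi (H.induce (comp H (fun f => f ≠ e) u)) lam)
      - ∏ u ∈ e, psi (H.induce ((comp H (fun f => f ≠ e) u).erase u)) lam := by
  obtain ⟨hne, hUni, hc, hnc⟩ := hT
  have hnil : ∀ f ∈ H.edges, f.Nonempty := fun f hf =>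
    Finset.card_pos.1 (by rw [hUni.2 f hf]; omega)
  have hcard2 : 2 ≤ e.card := by rw [hUni.2 e he]; omega
  rw [psi_edge he (hnil e he) hUni.1 lam]
  congr 1
  · -- deleted-edge part
    rw [psi_iUnion (s := e) (A := fun u => comp H (fun f => f ≠ e) u)]
    · apply Finset.prod_congr rfl
      intro u hu
      congr 1
      unfold induce
      congr 1
      ext f
      simp only [Finset.mem_filter, Finset.mem_erase]
      constructor
      · rintro ⟨⟨-, hf⟩, hsub⟩; exact ⟨hf, hsub⟩
      · rintro ⟨hf, hsub⟩
        refine ⟨⟨?_, hf⟩, hsub⟩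
        rintro rfl
        exact part_not_subset hnc hUni.1 hf hcard2 hu hsub
    · exact fun u hu u' hu' huu' => part_disjoint hnc he u hu u' hu' huu'
    · exact part_cover hc hUni.1 he (hnil e he)
    · intro f hf
      rw [Finset.mem_erase] at hf
      exact part_edge hc hUni.1 he (hnil e he) hf.2 hf.1 (hnil f hf.2)
    · intro f hf
      rw [Finset.mem_erase] at hf
      exact hnil f hf.2
  · -- contracted part
    rw [psi_iUnion (s := e) (A := fun u => (comp H (fun f => f ≠ e) u).erase u)]
    · apply Finset.prod_congr rfl
      intro u hu
      rw [induce_induce]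
      intro v hv
      rw [Finset.mem_erase] at hv
      rw [Finset.mem_sdiff]
      refine ⟨comp_subset hv.2, fun hve => ?_⟩
      have : v ∈ e ∩ comp H (fun f => f ≠ e) u := Finset.mem_inter.2 ⟨hve, hv.2⟩
      rw [part_inter hnc hUni.1 he hu] at this
      exact hv.1 (Finset.mem_singleton.1 this)
    · intro u hu u' hu' huu'
      exact (part_disjoint hnc he u hu u' hu' huu').mono
        (Finset.erase_subset _ _) (Finset.erase_subset _ _)
    · -- verts
      rw [verts_induce]
      ext v
      simp only [Finset.mem_sdiff, Finset.mem_biUnion, Finset.mem_erase]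
      constructor
      · rintro ⟨hv, hve⟩
        have := part_cover hc hUni.1 he (hnil e he) ▸ hv
        obtain ⟨u, hu, hvu⟩ := Finset.mem_biUnion.1 this
        exact ⟨u, hu, fun h => hve (h ▸ hu), hvu⟩
      · rintro ⟨u, hu, hvu, hvc⟩
        refine ⟨comp_subset hvc, fun hve => ?_⟩
        have : v ∈ e ∩ comp H (fun f => f ≠ e) u := Finset.mem_inter.2 ⟨hve, hvc⟩
        rw [part_inter hnc hUni.1 he hu] at this
        exact hvu (Finset.mem_singleton.1 this)
    · intro f hf
      simp only [edges_induce, Finset.mem_filter] at hf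
      obtain ⟨hf, hsub⟩ := hf
      have hfe : f ≠ e := by
        rintro rfl
        obtain ⟨v, hv⟩ := hnil f hf
        exact (Finset.mem_sdiff.1 (hsub hv)).2 hv
      obtain ⟨u, hu, hfu⟩ := part_edge hc hUni.1 he (hnil e he) hf hfe (hnil f hf)
      refine ⟨u, hu, fun v hv => Finset.mem_erase.2 ⟨?_, hfu hv⟩⟩
      rintro rfl
      exact (Finset.mem_sdiff.1 (hsub hv)).2 hu
    · intro f hf
      simp only [edges_induce, Finset.mem_filter] at hf
      exact hnil f hf.1

lemma psi_erase_decomp (hT : H.IsHypertree k) (hk : 3 ≤ k) (he : e ∈ H.edges)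
    {r : V} (hre : r ∈ e) (lam : ℂ) :
    psi (H.induce (H.verts.erase r)) lam
      = psi (H.induce ((comp H (fun f => f ≠ e) r).erase r)) lam
        * ∏ u ∈ e.erase r, psi (H.induce (comp H (fun f => f ≠ e) u)) lam := by
  obtain ⟨hne, hUni, hc, hnc⟩ := hT
  have hnil : ∀ f ∈ H.edges, f.Nonempty := fun f hf =>
    Finset.card_pos.1 (by rw [hUni.2 f hf]; omega)
  have hru : ∀ u ∈ e, u ≠ r → (comp H (fun f => f ≠ e) u).erase r
      = comp H (fun f => f ≠ e) u := by
    intro u hu hur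
    apply Finset.erase_eq_of_notMem
    intro hrc
    have : r ∈ e ∩ comp H (fun f => f ≠ e) u := Finset.mem_inter.2 ⟨hre, hrc⟩
    rw [part_inter hnc hUni.1 he hu] at this
    exact hur (Finset.mem_singleton.1 this).symm
  rw [psi_iUnion (s := e) (A := fun u => (comp H (fun f => f ≠ e) u).erase r)]
  · rw [← Finset.mul_prod_erase e _ hre]
    congr 1
    · have hsub : (comp H (fun f => f ≠ e) r).erase r ⊆ H.verts.erase r := by
        intro v hv
        rw [Finset.mem_erase] at hv ⊢
        exact ⟨hv.1, comp_subset hv.2⟩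
      rw [induce_induce H hsub]
    · apply Finset.prod_congr rfl
      intro u hu
      rw [Finset.mem_erase] at hu
      have hsub2 : comp H (fun f => f ≠ e) u ⊆ H.verts.erase r := by
        intro v hv
        refine Finset.mem_erase.2 ⟨?_, comp_subset hv⟩
        rintro rfl
        rw [← hru u hu.2 hu.1] at hv
        exact (Finset.mem_erase.1 hv).1 rfl
      rw [hru u hu.2 hu.1, induce_induce H hsub2]
  · intro u hu u' hu' huu'
    exact (part_disjoint hnc he u hu u' hu' huu').mono
      (Finset.erase_subset _ _) (Finset.erase_subset _ _)
  · rw [verts_induce]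
    ext v
    simp only [Finset.mem_erase, Finset.mem_biUnion]
    constructor
    · rintro ⟨hvr, hv⟩
      have := part_cover hc hUni.1 he (hnil e he) ▸ hv
      obtain ⟨u, hu, hvu⟩ := Finset.mem_biUnion.1 this
      exact ⟨u, hu, hvr, hvu⟩
    · rintro ⟨u, hu, hv⟩
      exact ⟨hv.1, comp_subset hv.2⟩
  · intro f hf
    simp only [edges_induce, Finset.mem_filter] at hf
    obtain ⟨hf, hsub⟩ := hf
    have hrf : r ∉ f := fun hrf => (Finset.mem_erase.1 (hsub hrf)).1 rfl
    have hfe : f ≠ e := fun h => hrf (h ▸ hre)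
    obtain ⟨u, hu, hfu⟩ := part_edge hc hUni.1 he (hnil e he) hf hfe (hnil f hf)
    exact ⟨u, hu, fun v hv => Finset.mem_erase.2
      ⟨fun h => hrf (h ▸ hv), hfu hv⟩⟩
  · intro f hf
    simp only [edges_induce, Finset.mem_filter] at hf
    exact hnil f hf.1

end StarHelpers

end WHypergraph
namespace WHypergraph

variable {V : Type*} [Fintype V] [DecidableEq V]

lemma prod_prod_erase {e : Finset V} (y : V → ℂ) (hy : ∀ u ∈ e, y u ≠ 0) :
    ∏ u ∈ e, ∏ w ∈ e.erase u, y w = ∏ u ∈ e, y u ^ (e.card - 1) := by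
  rcases Finset.eq_empty_or_nonempty e with rfl | hene
  · simp
  have hP : (∏ u ∈ e, y u) ≠ 0 := Finset.prod_ne_zero_iff.2 hy
  apply mul_right_cancel₀ hP
  have h1 : ∀ u ∈ e, (∏ w ∈ e.erase u, y w) * y u = ∏ w ∈ e, y w := fun u hu =>
    Finset.prod_erase_mul e y hu
  calc (∏ u ∈ e, ∏ w ∈ e.erase u, y w) * ∏ u ∈ e, y u
      = ∏ u ∈ e, ((∏ w ∈ e.erase u, y w) * y u) := (Finset.prod_mul_distrib).symm
    _ = ∏ _u ∈ e, (∏ w ∈ e, y w) := Finset.prod_congr rfl h1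
    _ = (∏ w ∈ e, y w) ^ e.card := Finset.prod_const _
    _ = (∏ w ∈ e, y w) ^ (e.card - 1) * ∏ u ∈ e, y u := by
        rw [← pow_succ]
        congr 1
        have := Finset.card_pos.2 hene
        omega
    _ = (∏ u ∈ e, y u ^ (e.card - 1)) * ∏ u ∈ e, y u := by rw [Finset.prod_pow]

lemma exists_edge_at {H : WHypergraph V} {k : ℕ} (hT : H.IsHypertree k) (hk : 3 ≤ k)
    {r : V} (hr : r ∈ H.verts) (hE : H.edges.Nonempty) : ∃ e ∈ H.edges, r ∈ e := by
  obtain ⟨hne, hUni, hc, hnc⟩ := id hT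
  obtain ⟨f, hf⟩ := hE
  obtain ⟨w, hw⟩ : f.Nonempty := Finset.card_pos.1 (by rw [hUni.2 f hf]; omega)
  have hrtg := hc r hr w (hUni.1 f hf hw)
  rcases Relation.ReflTransGen.cases_head hrtg with h | ⟨c, ⟨g, hg, hrg, -⟩, -⟩
  · exact ⟨f, hf, h ▸ hw⟩
  · exact ⟨g, hg, hrg⟩

lemma verts_eq_of_edges_empty {H : WHypergraph V} {k : ℕ} (hT : H.IsHypertree k)
    {r : V} (hr : r ∈ H.verts) (hE : H.edges = ∅) : H.verts = {r} := by
  ext v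
  simp only [Finset.mem_singleton]
  constructor
  · intro hv
    have hrtg := hT.2.2.1 v hv r hr
    rcases Relation.ReflTransGen.cases_head hrtg with h | ⟨c, ⟨g, hg, -⟩, -⟩
    · exact h
    · rw [hE] at hg; simp at hg
  · rintro rfl; exact hr

/-- The key identity (★). -/
lemma star {k : ℕ} (hk : 3 ≤ k) {lam : ℂ} :
    ∀ (n : ℕ) (H : WHypergraph V), H.edges.card = n → H.IsHypertree k →
      ∀ r ∈ H.verts, ∀ y : V → ℂ, (∀ v ∈ H.verts, y v ≠ 0) →
      (∀ v ∈ H.verts, v ≠ r → locSum H y v = lam * y v ^ (k-1)) →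
      psi H lam * y r ^ (k-1)
        = (lam * y r ^ (k-1) - locSum H y r) * psi (H.induce (H.verts.erase r)) lam := by
  intro n
  induction n using Nat.strong_induction_on with
  | _ n ih =>
    intro H hn hT r hr y hy heq
    rcases Finset.eq_empty_or_nonempty H.edges with hE | hE
    · have hverts : H.verts = {r} := verts_eq_of_edges_empty hT hr hE
      have h1 : psi H lam = lam := by rw [psi_of_edges_empty hE, hverts]; simp
      have h2 : locSum H y r = 0 := by unfold locSum; rw [hE]; simp
      have h3 : psi (H.induce (H.verts.erase r)) lam = 1 := by
        rw [psi_of_edges_empty (by rw [edges_induce, hE]; simp)]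
        rw [verts_induce, hverts]
        simp
      rw [h1, h2, h3]; ring
    · obtain ⟨e, he, hre⟩ := exists_edge_at hT hk hr hE
      obtain ⟨hvne, hUni, hc, hnc⟩ := id hT
      have heV : ∀ u ∈ e, u ∈ H.verts := fun u hu => hUni.1 e he hu
      set A : V → Finset V := fun u => comp H (fun f => f ≠ e) u with hA
      -- branch star identities
      have hbranch : ∀ u ∈ e, psi (H.induce (A u)) lam * y u ^ (k-1)
          = (lam * y u ^ (k-1) - locSum (H.induce (A u)) y u)
            * psi (H.induce ((A u).erase u)) lam := by
        intro u hu
        have hTu := part_hypertree hT he hu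
        have hlt : (H.induce (A u)).edges.card < n := hn ▸ part_edges_lt hT (by omega) he hu
        have := ih (H.induce (A u)).edges.card hlt (H.induce (A u)) rfl hTu u
          (by rw [verts_induce]; exact mem_comp_self (heV u hu)) y
          (fun v hv => hy v (comp_subset hv))
          ?_
        · rw [verts_induce] at this
          rwa [induce_induce H (Finset.erase_subset _ _)] at this
        · intro v hv hvu
          rw [verts_induce] at hv
          have hvr : v ≠ r := by
            by_cases hur : u = r
            · exact hur ▸ hvu
            · intro hveq
              rw [hveq] at hv
              exact Finset.disjoint_left.1 (part_disjoint hnc he u hu r hre hur) hv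
                (mem_comp_self hr)
          rw [locSum_branch hT hk he hu hv hvu y]
          exact heq v (comp_subset hv) hvr
      -- notation
      have hyne : ∀ u ∈ e, y u ≠ 0 := fun u hu => hy u (heV u hu)
      have f2 : ∀ u ∈ e.erase r, lam * y u ^ (k-1) - locSum (H.induce (A u)) y u
          = ∏ w ∈ e.erase u, y w := by
        intro u hu
        rw [Finset.mem_erase] at hu
        have := heq u (heV u hu.2) hu.1
        rw [locSum_split hT hk he hu.2 y] at this
        linear_combination -this
      have f3 : locSum H y r = (∏ w ∈ e.erase r, y w) + locSum (H.induce (A r)) y r :=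
        locSum_split hT hk he hre y
      rw [psi_decomp hT hk he lam, psi_erase_decomp hT hk he hre lam, f3]
      -- abbreviations
      have hbr := hbranch r hre
      have key1 : ∏ u ∈ e.erase r, (psi (H.induce (A u)) lam * y u ^ (k-1))
          = (∏ u ∈ e.erase r, ∏ w ∈ e.erase u, y w)
            * ∏ u ∈ e.erase r, psi (H.induce ((A u).erase u)) lam := by
        rw [← Finset.prod_mul_distrib]
        apply Finset.prod_congr rfl
        intro u hu
        rw [hbranch u (Finset.mem_of_mem_erase hu), f2 u hu]
      have E1 : ∏ u ∈ e, psi (H.induce (A u)) lam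
          = psi (H.induce (A r)) lam * ∏ u ∈ e.erase r, psi (H.induce (A u)) lam :=
        (Finset.mul_prod_erase e _ hre).symm
      have E2 : ∏ u ∈ e, psi (H.induce ((A u).erase u)) lam
          = psi (H.induce ((A r).erase r)) lam
            * ∏ u ∈ e.erase r, psi (H.induce ((A u).erase u)) lam :=
        (Finset.mul_prod_erase e _ hre).symm
      have E6 : y r ^ (k-1) * ∏ u ∈ e.erase r, y u ^ (k-1)
          = (∏ w ∈ e.erase r, y w) * ∏ u ∈ e.erase r, ∏ w ∈ e.erase u, y w := by
        rw [Finset.mul_prod_erase e (fun u => y u ^ (k-1)) hre,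
          Finset.mul_prod_erase e (fun u => ∏ w ∈ e.erase u, y w) hre,
          prod_prod_erase y hyne, hUni.2 e he]
      have E5 : (∏ u ∈ e.erase r, psi (H.induce (A u)) lam) * ∏ u ∈ e.erase r, y u ^ (k-1)
          = (∏ u ∈ e.erase r, ∏ w ∈ e.erase u, y w)
            * ∏ u ∈ e.erase r, psi (H.induce ((A u).erase u)) lam := by
        rw [← Finset.prod_mul_distrib, key1]
      have hCprod : (∏ u ∈ e.erase r, y u ^ (k-1)) ≠ 0 :=
        Finset.prod_ne_zero_iff.2 fun u hu =>
          pow_ne_zero _ (hyne u (Finset.mem_of_mem_erase hu))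
      apply mul_right_cancel₀ hCprod
      rw [E1, E2]
      linear_combination
        ((∏ u ∈ e.erase r, psi (H.induce (A u)) lam) * ∏ u ∈ e.erase r, y u ^ (k-1)) * hbr
        + ((∏ w ∈ e.erase r, y w) * psi (H.induce ((A r).erase r)) lam) * E5
        - (psi (H.induce ((A r).erase r)) lam
            * ∏ u ∈ e.erase r, psi (H.induce ((A u).erase u)) lam) * E6

end WHypergraph
namespace WHypergraph

variable {V : Type*} [Fintype V] [DecidableEq V]

lemma exists_kth_root {k : ℕ} (hk : 1 ≤ k) {c : ℂ} (hc : c ≠ 0) :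
    ∃ z : ℂ, z ^ k = c ∧ z ≠ 0 := by
  have hdeg : 0 < (Polynomial.X ^ k - Polynomial.C c).degree := by
    rw [Polynomial.degree_X_pow_sub_C (by omega)]
    exact_mod_cast (by omega : 0 < k)
  obtain ⟨z, hz⟩ := Complex.exists_root hdeg
  rw [Polynomial.IsRoot, Polynomial.eval_sub, Polynomial.eval_pow, Polynomial.eval_X,
    Polynomial.eval_C, sub_eq_zero] at hz
  exact ⟨z, hz, fun h => hc (by rw [← hz, h, zero_pow (by omega)])⟩

lemma branch_proper {H : WHypergraph V} {k : ℕ} (hT : H.IsHypertree k) (hk : 3 ≤ k)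
    {e : Finset V} (he : e ∈ H.edges) {u : V} (hu : u ∈ e) :
    comp H (fun f => f ≠ e) u ≠ H.verts := by
  obtain ⟨hne, hUni, hc, hnc⟩ := id hT
  intro h
  exact part_not_subset hnc hUni.1 he (by rw [hUni.2 e he]; omega) hu
    (h ▸ hUni.1 e he)

/-- Existence of a partial eigenvector with defect only at `r`, on a minimal subtree. -/
lemma exists_partial {k : ℕ} (hk : 3 ≤ k) {lam : ℂ} (hlam : lam ≠ 0) :
    ∀ (n : ℕ) (H : WHypergraph V), H.edges.card = n → H.IsHypertree k →
      (∀ U : Finset V, U ⊆ H.verts → U ≠ H.verts → (H.induce U).IsHypertree k →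
        psi (H.induce U) lam ≠ 0) →
      ∀ r ∈ H.verts, ∃ y : V → ℂ, (∀ v ∈ H.verts, y v ≠ 0) ∧
        (∀ v ∈ H.verts, v ≠ r → locSum H y v = lam * y v ^ (k-1)) := by
  intro n
  induction n using Nat.strong_induction_on with
  | _ n ih =>
    intro H hn hT hsub r hr
    rcases Finset.eq_empty_or_nonempty H.edges with hE | hE
    · refine ⟨fun _ => 1, fun v _ => one_ne_zero, fun v hv hvr => ?_⟩
      rw [verts_eq_of_edges_empty hT hr hE, Finset.mem_singleton] at hv
      exact absurd hv hvr
    · obtain ⟨e, he, hre⟩ := exists_edge_at hT hk hr hE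
      obtain ⟨hvne, hUni, hc, hnc⟩ := id hT
      have heV : ∀ u ∈ e, u ∈ H.verts := fun u hu => hUni.1 e he hu
      set A : V → Finset V := fun u => comp H (fun f => f ≠ e) u with hA
      -- branch data
      have hTu : ∀ u ∈ e, (H.induce (A u)).IsHypertree k := fun u hu =>
        part_hypertree hT he hu
      have hAsub : ∀ u ∈ e, A u ⊆ H.verts := fun u _ => comp_subset
      have hAne : ∀ u ∈ e, A u ≠ H.verts := fun u hu => branch_proper hT hk he hu
      have hsubU : ∀ u ∈ e, ∀ U : Finset V, U ⊆ A u → U ≠ A u →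
          ((H.induce (A u)).induce U).IsHypertree k →
          psi ((H.induce (A u)).induce U) lam ≠ 0 := by
        intro u hu U hU hUne hUT
        rw [induce_induce H hU] at hUT ⊢
        refine hsub U (hU.trans (hAsub u hu)) ?_ hUT
        intro h
        apply hAne u hu
        apply Finset.Subset.antisymm (hAsub u hu)
        rw [← h]
        exact hU
      -- get branch vectors
      have hbr : ∀ u, u ∈ e → ∃ y : V → ℂ, (∀ v ∈ A u, y v ≠ 0) ∧ y u = 1 ∧
          (∀ v ∈ A u, v ≠ u → locSum (H.induce (A u)) y v = lam * y v ^ (k-1)) := by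
        intro u hu
        obtain ⟨y0, hy0, heq0⟩ := ih (H.induce (A u)).edges.card
          (hn ▸ part_edges_lt hT (by omega) he hu) (H.induce (A u)) rfl (hTu u hu)
          (hsubU u hu) u (by rw [verts_induce]; exact mem_comp_self (heV u hu))
        rw [verts_induce] at hy0 heq0
        have hyu : y0 u ≠ 0 := hy0 u (mem_comp_self (heV u hu))
        refine ⟨fun v => (y0 u)⁻¹ * y0 v, fun v hv => mul_ne_zero (inv_ne_zero hyu) (hy0 v hv),
          inv_mul_cancel₀ hyu, ?_⟩
        intro v hv hvu
        rw [locSum_smul (isUniform_induce hUni _) (by omega) _ y0 v, heq0 v hv hvu,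
          mul_pow]
        ring
      choose! z hz1 hz2 hz3 using hbr
      -- defects
      set D : V → ℂ := fun u => lam - locSum (H.induce (A u)) (z u) u with hD
      have hDne : ∀ u ∈ e, D u ≠ 0 := by
        intro u hu
        have hstar := star hk (H.induce (A u)).edges.card (H.induce (A u)) rfl (hTu u hu) u
          (by rw [verts_induce]; exact mem_comp_self (heV u hu)) (z u)
          (by rw [verts_induce]; exact hz1 u hu)
          (by rw [verts_induce]; intro v hv hvu; exact hz3 u hu v hv hvu)
        rw [verts_induce, hz2 u hu, one_pow, mul_one, mul_one,
          induce_induce H (Finset.erase_subset _ _)] at hstar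
        have hψ : psi (H.induce (A u)) lam ≠ 0 :=
          hsub (A u) (hAsub u hu) (hAne u hu) (hTu u hu)
        intro h
        have h' : lam - locSum (H.induce (A u)) (z u) u = 0 := h
        rw [h', zero_mul] at hstar
        exact hψ hstar
      -- kth roots
      have hroots : ∀ u, u ∈ e.erase r → ∃ t : ℂ, t ^ k = (D u)⁻¹ ∧ t ≠ 0 :=
        fun u hu => exists_kth_root (by omega)
          (inv_ne_zero (hDne u (Finset.mem_of_mem_erase hu)))
      choose! t ht1 ht2 using hroots
      set c : ℂ := ∏ w ∈ e.erase r, t w with hcdef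
      have hcne : c ≠ 0 := Finset.prod_ne_zero_iff.2 ht2
      set τ : V → ℂ := fun u => t u * c with hτ
      have hτne : ∀ u ∈ e.erase r, τ u ≠ 0 := fun u hu => mul_ne_zero (ht2 u hu) hcne
      -- the glued vector
      set y : V → ℂ := fun v =>
        if v ∈ A r then z r v
        else if h2 : ∃ u ∈ e.erase r, v ∈ A u then τ h2.choose * z h2.choose v
        else 1 with hy
      -- glue evaluation lemmas
      have hyr : ∀ v ∈ A r, y v = z r v := by
        intro v hv; rw [hy]; simp only [if_pos hv]
      have hyu : ∀ u ∈ e.erase r, ∀ v ∈ A u, y v = τ u * z u v := by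
        intro u hu v hv
        have hur : u ≠ r := (Finset.mem_erase.1 hu).1
        have hvr : v ∉ A r := fun hvr => Finset.disjoint_left.1
          (part_disjoint hnc he u (Finset.mem_of_mem_erase hu) r hre hur) hv hvr
        have h2 : ∃ u' ∈ e.erase r, v ∈ A u' := ⟨u, hu, hv⟩
        rw [hy]
        simp only [if_neg hvr, dif_pos h2]
        obtain ⟨hu', hv'⟩ := h2.choose_spec
        by_cases huu : h2.choose = u
        · rw [huu]
        · exact absurd hv (Finset.disjoint_left.1 (part_disjoint hnc he h2.choose
            (Finset.mem_of_mem_erase hu') u (Finset.mem_of_mem_erase hu) huu) hv')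
      -- coverage
      have hcover : ∀ v ∈ H.verts, v ∈ A r ∨ ∃ u ∈ e.erase r, v ∈ A u := by
        intro v hv
        have hnil : e.Nonempty := Finset.card_pos.1 (by rw [hUni.2 e he]; omega)
        have := part_cover hc hUni.1 he hnil ▸ hv
        obtain ⟨u, hu, hvu⟩ := Finset.mem_biUnion.1 this
        by_cases hur : u = r
        · exact Or.inl (hur ▸ hvu)
        · exact Or.inr ⟨u, Finset.mem_erase.2 ⟨hur, hu⟩, hvu⟩
      have hrAr : r ∈ A r := mem_comp_self hr
      have hyrr : y r = 1 := by rw [hyr r hrAr, hz2 r hre]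
      refine ⟨y, ?_, ?_⟩
      · -- nonzero
        intro v hv
        rcases hcover v hv with h | ⟨u, hu, hvu⟩
        · rw [hyr v h]; exact hz1 r hre v h
        · rw [hyu u hu v hvu]
          exact mul_ne_zero (hτne u hu) (hz1 u (Finset.mem_of_mem_erase hu) v hvu)
      · -- equations
        intro v hv hvr
        rcases hcover v hv with hvAr | ⟨u, hu, hvu⟩
        · -- v in the root branch
          rw [← locSum_branch hT hk he hre hvAr hvr y,
            locSum_congr (y := z r) (fun f hf hvf w hw => hyr w (by
              simp only [edges_induce, Finset.mem_filter] at hf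
              exact hf.2 hw)), hz3 r hre v hvAr hvr, hyr v hvAr]
        · have huE := Finset.mem_of_mem_erase hu
          have hur : u ≠ r := (Finset.mem_erase.1 hu).1
          have hloc : locSum (H.induce (A u)) y v = lam * (τ u * z u v) ^ (k-1)
              ∨ True := Or.inr trivial
          have hsmul : locSum (H.induce (A u)) y v
              = τ u ^ (k-1) * locSum (H.induce (A u)) (z u) v := by
            rw [locSum_congr (y := fun w => τ u * z u w) (fun f hf hvf w hw => hyu u hu w (by
              simp only [edges_induce, Finset.mem_filter] at hf
              exact hf.2 hw))]
            exact locSum_smul (isUniform_induce hUni _) (by omega) _ _ v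
          by_cases hvu' : v = u
          · -- the branch root: use the defect
            subst hvu'
            rw [locSum_split hT hk he huE y, hsmul]
            have hDdef : locSum (H.induce (A v)) (z v) v = lam - D v := by
              rw [hD]; ring
            have hprod : (∏ w ∈ e.erase v, y w) = ∏ w ∈ (e.erase r).erase v, τ w := by
              have hre' : r ∈ e.erase v := Finset.mem_erase.2 ⟨fun h => hur h.symm, hre⟩
              rw [← Finset.mul_prod_erase (e.erase v) y hre', hyrr, one_mul,
                Finset.erase_right_comm]
              apply Finset.prod_congr rfl
              intro w hw
              have hw' := Finset.mem_of_mem_erase hw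
              rw [hyu w hw' w (mem_comp_self (heV w (Finset.mem_of_mem_erase hw'))),
                hz2 w (Finset.mem_of_mem_erase hw'), mul_one]
            have hyv : y v = τ v := by
              rw [hyu v hu v (mem_comp_self (heV v huE)), hz2 v huE, mul_one]
            rw [hprod, hDdef, hyv]
            -- algebra: ∏_{(e∖r)∖v} τ + τ_v^{k-1}(λ − D v) = λ τ_v^{k-1}
            have hkey : ∏ w ∈ (e.erase r).erase v, τ w = τ v ^ (k-1) * D v := by
              apply mul_right_cancel₀ (hτne v hu)
              have h1 : (∏ w ∈ (e.erase r).erase v, τ w) * τ v = ∏ w ∈ e.erase r, τ w :=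
                Finset.prod_erase_mul _ _ hu
              have hcardE : (e.erase r).card = k - 1 := by
                rw [Finset.card_erase_of_mem hre, hUni.2 e he]
              have h2 : ∏ w ∈ e.erase r, τ w = c ^ k := by
                rw [hτ]
                simp only
                rw [Finset.prod_mul_distrib, Finset.prod_const, ← hcdef, hcardE,
                  ← pow_succ']
                congr 1
                omega
              have h3 : τ v ^ (k-1) * D v * τ v = c ^ k := by
                have hτk : τ v ^ k = (D v)⁻¹ * c ^ k := by
                  rw [hτ]
                  simp only
                  rw [mul_pow, ht1 v hu]
                have hpow : τ v ^ (k-1) * τ v = τ v ^ k := by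
                  rw [← pow_succ]
                  congr 1
                  omega
                calc τ v ^ (k-1) * D v * τ v = (τ v ^ (k-1) * τ v) * D v := by ring
                  _ = τ v ^ k * D v := by rw [hpow]
                  _ = c ^ k := by
                      rw [hτk, mul_comm ((D v)⁻¹) (c^k), mul_assoc,
                        inv_mul_cancel₀ (hDne v huE), mul_one]
              rw [h1, h2, h3]
            rw [hkey]
            ring
          · -- interior vertex of a non-root branch
            rw [← locSum_branch hT hk he huE hvu hvu' y, hsmul,
              hz3 u huE v hvu hvu', hyu u hu v hvu, mul_pow]
            ring

end WHypergraph
namespace WHypergraph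

variable {V : Type*} [Fintype V] [DecidableEq V]

lemma image_cons {m : ℕ} (v : V) (t : Fin m → V) :
    Finset.univ.image (Fin.cons v t : Fin (m+1) → V) = insert v (Finset.univ.image t) := by
  ext w
  simp only [Finset.mem_image, Finset.mem_insert, Finset.mem_univ, true_and]
  constructor
  · rintro ⟨i, rfl⟩
    rcases Fin.eq_zero_or_eq_succ i with rfl | ⟨j, rfl⟩
    · exact Or.inl (by simp)
    · exact Or.inr ⟨j, by simp⟩
  · rintro (rfl | ⟨j, rfl⟩)
    · exact ⟨0, by simp⟩
    · exact ⟨j.succ, by simp⟩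

lemma adjEntry_eq {H : WHypergraph V} {m : ℕ} (hm : 1 ≤ m) (t : Fin (m+1) → V) :
    H.adjEntry (fun _ => (0:ℂ)) (fun _ => (1:ℂ)) t
      = if Function.Injective t ∧ Finset.univ.image t ∈ H.edges
          then ((m.factorial : ℂ))⁻¹ else 0 := by
  unfold adjEntry
  by_cases h1 : (∀ i, t i = t 0) ∧ t 0 ∈ H.verts
  · rw [if_pos h1]
    have hni : ¬ Function.Injective t := by
      intro hinj
      have h01 : (⟨0, by omega⟩ : Fin (m+1)) ≠ ⟨1, by omega⟩ := by
        simp [Fin.ext_iff]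
      exact h01 (hinj ((h1.1 ⟨0, by omega⟩).trans (h1.1 ⟨1, by omega⟩).symm))
    rw [if_neg (fun hc => hni hc.1)]
  · rw [if_neg h1]
    split_ifs with h2
    · rw [one_div]
    · rfl

lemma fiber_card {k : ℕ} (hk : 3 ≤ k) {s : Finset V} (hs : s.card = k - 1) :
    (Finset.univ.filter (fun t : Fin (k-1) → V =>
      Function.Injective t ∧ Finset.univ.image t = s)).card = (k-1).factorial := by
  classical
  have hcard : Fintype.card {u // u ∈ s} = k - 1 := by
    rw [Fintype.card_coe, hs]
  have hcard' : Fintype.card (Fin (k-1)) = Fintype.card {u // u ∈ s} := by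
    rw [hcard, Fintype.card_fin]
  have hfin : Fintype.card (Fin (k-1) ≃ {u // u ∈ s}) = (k-1).factorial := by
    rw [Fintype.card_equiv (Fintype.equivOfCardEq hcard'), Fintype.card_fin]
  rw [← hfin, ← Finset.card_univ]
  refine Finset.card_bij'
    (fun t ht => Equiv.ofBijective
      (fun i => (⟨t i, by
        have h := (Finset.mem_filter.1 ht).2.2
        rw [← h]
        exact Finset.mem_image_of_mem t (Finset.mem_univ i)⟩ : {u // u ∈ s}))
      ((Fintype.bijective_iff_injective_and_card _).2
        ⟨fun a b hab => (Finset.mem_filter.1 ht).2.1 (by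
          simpa [Subtype.ext_iff] using hab), hcard'⟩))
    (fun σ _ => fun i => (σ i : V)) ?_ ?_ ?_ ?_
  · intro t ht
    exact Finset.mem_univ _
  · intro σ hσ
    rw [Finset.mem_filter]
    refine ⟨Finset.mem_univ _, fun a b hab => σ.injective (Subtype.ext hab), ?_⟩
    ext w
    simp only [Finset.mem_image, Finset.mem_univ, true_and]
    constructor
    · rintro ⟨i, rfl⟩; exact (σ i).2
    · intro hw
      exact ⟨σ.symm ⟨w, hw⟩, by simp⟩
  · intro t ht
    rfl
  · intro σ hσ
    exact Equiv.ext fun i => Subtype.ext rfl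

lemma tensor_sum {H : WHypergraph V} {k : ℕ} (hU : H.IsUniform k) (hk : 3 ≤ k)
    (x : V → ℂ) (v : V) :
    ∑ t : Fin (k-1) → V, H.adjEntry (fun _ => (0:ℂ)) (fun _ => (1:ℂ)) (Fin.cons v t)
        * ∏ i, x (t i)
      = locSum H x v := by
  classical
  have hfact : ((k-1).factorial : ℂ) ≠ 0 := by
    exact_mod_cast Nat.factorial_ne_zero (k-1)
  have hrw : ∀ t : Fin (k-1) → V,
      H.adjEntry (fun _ => (0:ℂ)) (fun _ => (1:ℂ)) (Fin.cons v t) * ∏ i, x (t i)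
      = if Function.Injective (Fin.cons v t : Fin (k-1+1) → V)
            ∧ Finset.univ.image (Fin.cons v t) ∈ H.edges
          then (((k-1).factorial : ℂ))⁻¹ * ∏ i, x (t i) else 0 := by
    intro t
    rw [adjEntry_eq (by omega)]
    split_ifs with h
    · rfl
    · exact zero_mul _
  rw [Finset.sum_congr rfl (fun t _ => hrw t), ← Finset.sum_filter]
  have hmaps : ∀ t ∈ Finset.univ.filter (fun t : Fin (k-1) → V =>
      Function.Injective (Fin.cons v t : Fin (k-1+1) → V)
        ∧ Finset.univ.image (Fin.cons v t) ∈ H.edges),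
      Finset.univ.image (Fin.cons v t) ∈ H.edges.filter (fun e => v ∈ e) := by
    intro t ht
    rw [Finset.mem_filter] at ht ⊢
    refine ⟨ht.2.2, ?_⟩
    rw [image_cons]
    exact Finset.mem_insert_self _ _
  rw [← Finset.sum_fiberwise_of_maps_to hmaps]
  unfold locSum
  apply Finset.sum_congr rfl
  intro e he
  rw [Finset.mem_filter] at he
  have hfib : (Finset.univ.filter (fun t : Fin (k-1) → V =>
      Function.Injective (Fin.cons v t : Fin (k-1+1) → V)
        ∧ Finset.univ.image (Fin.cons v t) ∈ H.edges)).filter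
        (fun t => Finset.univ.image (Fin.cons v t) = e)
      = Finset.univ.filter (fun t : Fin (k-1) → V =>
          Function.Injective t ∧ Finset.univ.image t = e.erase v) := by
    ext t
    simp only [Finset.mem_filter, Finset.mem_univ, true_and]
    constructor
    · rintro ⟨⟨hinj, hmem⟩, himg⟩
      have hvnr : v ∉ Finset.univ.image t := by
        intro hv
        obtain ⟨j, -, hj⟩ := Finset.mem_image.1 hv
        have : (Fin.cons v t : Fin (k-1+1) → V) j.succ
            = (Fin.cons v t : Fin (k-1+1) → V) 0 := by
          rw [Fin.cons_succ, Fin.cons_zero, hj]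
        exact (Fin.succ_ne_zero j) (hinj this)
      constructor
      · intro a b hab
        have : (Fin.cons v t : Fin (k-1+1) → V) a.succ
            = (Fin.cons v t : Fin (k-1+1) → V) b.succ := by
          rw [Fin.cons_succ, Fin.cons_succ, hab]
        exact Fin.succ_injective _ (hinj this)
      · rw [image_cons] at himg
        rw [← himg, Finset.erase_insert hvnr]
    · rintro ⟨hinj, himg⟩
      have hvnr : v ∉ Finset.univ.image t := by
        rw [himg]
        exact fun hv => (Finset.mem_erase.1 hv).1 rfl
      have hconsimg : Finset.univ.image (Fin.cons v t : Fin (k-1+1) → V) = e := by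
        rw [image_cons, himg, Finset.insert_erase he.2]
      refine ⟨⟨?_, hconsimg ▸ he.1⟩, hconsimg⟩
      intro a b hab
      rcases Fin.eq_zero_or_eq_succ a with rfl | ⟨a', rfl⟩ <;>
        rcases Fin.eq_zero_or_eq_succ b with rfl | ⟨b', rfl⟩
      · rfl
      · exfalso
        rw [Fin.cons_zero, Fin.cons_succ] at hab
        exact hvnr (hab ▸ Finset.mem_image_of_mem t (Finset.mem_univ b'))
      · exfalso
        rw [Fin.cons_zero, Fin.cons_succ] at hab
        exact hvnr (hab ▸ Finset.mem_image_of_mem t (Finset.mem_univ a'))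
      · rw [Fin.cons_succ, Fin.cons_succ] at hab
        rw [hinj hab]
  rw [hfib]
  have hconst : ∀ t ∈ Finset.univ.filter (fun t : Fin (k-1) → V =>
      Function.Injective t ∧ Finset.univ.image t = e.erase v),
      (((k-1).factorial : ℂ))⁻¹ * ∏ i, x (t i)
        = (((k-1).factorial : ℂ))⁻¹ * ∏ u ∈ e.erase v, x u := by
    intro t ht
    rw [Finset.mem_filter] at ht
    congr 1
    rw [← ht.2.2, Finset.prod_image (fun a _ b _ hab => ht.2.1 hab)]
  rw [Finset.sum_congr rfl hconst, Finset.sum_const,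
    fiber_card hk (by rw [Finset.card_erase_of_mem he.2, hU.2 e he.1]), nsmul_eq_mul,
    ← mul_assoc, mul_inv_cancel₀ hfact, one_mul]

lemma eigen_iff {H : WHypergraph V} {k : ℕ} (hU : H.IsUniform k) (hk : 3 ≤ k) (lam : ℂ) :
    H.IsEigenvalue (fun _ => (0:ℂ)) (fun _ => (1:ℂ)) k lam ↔
      ∃ x : V → ℂ, (∃ v ∈ H.verts, x v ≠ 0) ∧
        ∀ v ∈ H.verts, locSum H x v = lam * x v ^ (k-1) := by
  unfold IsEigenvalue IsEigenpair
  constructor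
  · rintro ⟨x, h1, h2⟩
    exact ⟨x, h1, fun v hv => by rw [← tensor_sum hU hk x v]; exact h2 v hv⟩
  · rintro ⟨x, h1, h2⟩
    exact ⟨x, h1, fun v hv => by rw [tensor_sum hU hk x v]; exact h2 v hv⟩

end WHypergraph
namespace WHypergraph

variable {V : Type*} [Fintype V] [DecidableEq V]

lemma mVerts_card {H : WHypergraph V} {k : ℕ} (hU : H.IsUniform k)
    {M : Finset (Finset V)} (hM : M ∈ H.matchings) : (mVerts M).card = k * M.card := by
  unfold mVerts
  rw [Finset.card_biUnion (t := id)
    (fun e he f hf hef => (mem_matchings.1 hM).2 e he f hf hef)]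
  rw [Finset.sum_congr rfl (fun e he => by
    simpa using hU.2 e ((mem_matchings.1 hM).1 he)),
    Finset.sum_const, smul_eq_mul, mul_comm]

lemma matchingNumber_le {H : WHypergraph V} {k : ℕ} (hU : H.IsUniform k) :
    k * H.matchingNumber ≤ H.verts.card := by
  obtain ⟨M0, hM0, hsup⟩ := Finset.exists_mem_eq_sup H.matchings
    ⟨∅, empty_mem_matchings H⟩ Finset.card
  unfold matchingNumber
  rw [hsup, ← mVerts_card hU hM0]
  exact Finset.card_le_card (mVerts_subset hM0 hU.1)

lemma phi_psi {H : WHypergraph V} {k : ℕ} (hU : H.IsUniform k) (lam : ℂ) :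
    psi H lam = lam ^ (H.verts.card - k * H.matchingNumber) * H.phiPoly k lam := by
  unfold psi phiPoly
  rw [Finset.mul_sum]
  apply Finset.sum_congr rfl
  intro M hM
  have h1 : (mVerts M).card = k * M.card := mVerts_card hU hM
  have h2 : mVerts M ⊆ H.verts := mVerts_subset hM hU.1
  have h3 : (H.verts \ mVerts M).card = H.verts.card - k * M.card := by
    rw [Finset.card_sdiff_of_subset h2, h1]
  have h4 : M.card ≤ H.matchingNumber := Finset.le_sup hM
  have h5 : k * H.matchingNumber ≤ H.verts.card := matchingNumber_le hU
  have h6 : k * M.card ≤ H.verts.card := by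
    calc k * M.card ≤ k * H.matchingNumber := Nat.mul_le_mul_left k h4
      _ ≤ H.verts.card := h5
  rw [h3]
  have hexp : H.verts.card - k * M.card
      = (H.verts.card - k * H.matchingNumber) + (H.matchingNumber - M.card) * k := by
    have := Nat.mul_le_mul_left k h4
    have h7 : (H.matchingNumber - M.card) * k
        = k * H.matchingNumber - k * M.card := by
      rw [Nat.sub_mul, Nat.mul_comm H.matchingNumber k, Nat.mul_comm M.card k]
    omega
  rw [hexp, pow_add]
  ring

lemma phi_zero_iff {H : WHypergraph V} {k : ℕ} (hU : H.IsUniform k) {lam : ℂ}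
    (hlam : lam ≠ 0) : H.phiPoly k lam = 0 ↔ psi H lam = 0 := by
  rw [phi_psi hU lam]
  constructor
  · intro h; rw [h, mul_zero]
  · intro h
    rcases mul_eq_zero.1 h with h | h
    · exact absurd h (pow_ne_zero _ hlam)
    · exact h

lemma psi_eq_zero_of_eigen {H : WHypergraph V} {k : ℕ} (hT : H.IsHypertree k) (hk : 3 ≤ k)
    {lam : ℂ} {y : V → ℂ} (hy : ∀ v ∈ H.verts, y v ≠ 0)
    (heq : ∀ v ∈ H.verts, locSum H y v = lam * y v ^ (k-1)) : psi H lam = 0 := by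
  obtain ⟨r, hr⟩ := hT.1
  have hstar := star hk H.edges.card H rfl hT r hr y hy (fun v hv _ => heq v hv)
  rw [heq r hr, sub_self, zero_mul] at hstar
  exact (mul_eq_zero.1 hstar).resolve_right (pow_ne_zero _ (hy r hr))

lemma inter_card_le_one {H : WHypergraph V} {k : ℕ} (hT : H.IsHypertree k)
    {U : Finset V} (hUc : (H.induce U).Connected)
    {f : Finset V} (hf : f ∈ H.edges) (hfU : ¬ f ⊆ U) : (f ∩ U).card ≤ 1 := by
  by_contra h
  obtain ⟨a, ha, b, hb, hab⟩ := Finset.one_lt_card.1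
    (show 1 < (f ∩ U).card by omega)
  rw [Finset.mem_inter] at ha hb
  have hrtg := hUc a ha.2 b hb.2
  have hrtg' : Relation.ReflTransGen
      (fun x y => ∃ g ∈ H.edges, (g ⊆ U) ∧ x ∈ g ∧ y ∈ g) a b := by
    refine Relation.ReflTransGen.mono ?_ _ _ hrtg
    rintro x y ⟨g, hg, hx, hy⟩
    simp only [edges_induce, Finset.mem_filter] at hg
    exact ⟨g, hg.1, hg.2, hx, hy⟩
  exact not_rtg_avoid hT.2.2.2 hf (fun g hg => fun hge => hfU (hge ▸ hg)) ha.1 hb.1 hab hrtg'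

/-- nonvanishing of `ψ` on proper induced subforests of a minimal subtree -/
lemma psi_subforest_ne_zero {H : WHypergraph V} {k : ℕ} (hT : H.IsHypertree k) (hk : 3 ≤ k)
    {lam : ℂ}
    (hsub : ∀ U : Finset V, U ⊆ H.verts → U ≠ H.verts → (H.induce U).IsHypertree k →
      psi (H.induce U) lam ≠ 0) :
    ∀ (m : ℕ) (W : Finset V), W.card = m → W ⊆ H.verts → W ≠ H.verts →
      psi (H.induce W) lam ≠ 0 := by
  obtain ⟨hne, hUni, hcon, hnc⟩ := id hT
  intro m
  induction m using Nat.strong_induction_on with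
  | _ m ih =>
    intro W hm hWsub hWne
    rcases Finset.eq_empty_or_nonempty W with rfl | ⟨a, ha⟩
    · have hE : (H.induce ∅).edges = ∅ := by
        rw [Finset.eq_empty_iff_forall_notMem]
        intro f hfm
        simp only [edges_induce, Finset.mem_filter, Finset.subset_empty] at hfm
        have := hUni.2 f hfm.1
        rw [hfm.2] at this
        simp at this
        omega
      rw [psi_of_edges_empty hE]
      simp
    · set G := H.induce W with hG
      set C := comp G (fun _ => True) a with hC
      have hGU : G.IsUniform k := isUniform_induce hUni W
      have hCW : C ⊆ W := comp_subset
      have haC : a ∈ C := mem_comp_self (by rw [hG]; exact ha)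
      have hCsub : C ⊆ H.verts := hCW.trans hWsub
      have hsplit := psi_split (H := G) (A := C) (B := W \ C)
        (Finset.disjoint_sdiff) ?_ ?_ (fun f hf => Finset.card_pos.1
          (by rw [hGU.2 f hf]; omega)) lam
      · rw [hG] at hsplit
        rw [hsplit, induce_induce H hCW, induce_induce H (Finset.sdiff_subset)]
        apply mul_ne_zero
        · -- component is a proper induced subtree
          apply hsub C hCsub
          · intro h
            obtain ⟨w, hwV, hwW⟩ := Finset.exists_of_ssubset
              (lt_of_le_of_ne hWsub hWne)
            exact hwW (hCW (h ▸ hwV))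
          · refine ⟨⟨a, haC⟩, isUniform_induce hUni C, ?_, noCycle_induce hnc C⟩
            have := comp_connected (H := G) (P := fun _ => True) (a := a)
              (fun f hf => by
                simp only [hG, edges_induce, Finset.mem_filter] at hf
                exact hf.2) (by rw [hG]; exact ha)
            rwa [hG, induce_induce H hCW] at this
        · -- smaller part by induction
          apply ih (W \ C).card ?_ _ rfl (Finset.sdiff_subset.trans hWsub)
          · intro h
            have : a ∈ W \ C := h ▸ hWsub ha
            exact (Finset.mem_sdiff.1 this).2 haC
          · rw [← hm]
            exact Finset.card_lt_card (Finset.sdiff_ssubset hCW ⟨a, haC⟩)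
      · rw [hG, verts_induce]
        rw [Finset.union_sdiff_of_subset hCW]
      · intro f hf
        by_cases hfC : ∃ x ∈ f, x ∈ C
        · obtain ⟨x, hxf, hxC⟩ := hfC
          exact Or.inl (comp_closure (H := G) (fun g hg => by
            simp only [hG, edges_induce, Finset.mem_filter] at hg
            exact hg.2) hf trivial hxf hxC)
        · refine Or.inr fun x hx => Finset.mem_sdiff.2 ⟨?_, fun hxC => hfC ⟨x, hx, hxC⟩⟩
          simp only [hG, edges_induce, Finset.mem_filter] at hf
          exact hf.2 hx

end WHypergraph
/-- For a `k`-uniform hypertree `T` with `k ≥ 3`, a nonzero `lam`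
is an eigenvalue of the adjacency tensor `A(T)` (all vertex weights `0`, all
edge weights `1`) iff there is an induced subtree `T'` of `T` such that `lam`
is a root of `φ(T',x) = ∑_{i ≥ 0} (−1)^i p(T',i) x^{(m(T')−i)k}`. -/
theorem eigenvalue_iff_subtree_phiPoly_root
    {V : Type*} [Fintype V] [DecidableEq V]
    (T : WHypergraph V) (k : ℕ) (hk : 3 ≤ k) (hT : T.IsHypertree k)
    (lam : ℂ) (hlam : lam ≠ 0) :
    T.IsEigenvalue (fun _ => (0 : ℂ)) (fun _ => (1 : ℂ)) k lam ↔
      ∃ T' : WHypergraph V, T.IsSubtree T' k ∧ T'.phiPoly k lam = 0 := by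
  classical
  obtain ⟨hvne, hUni, hcon, hnc⟩ := id hT
  constructor
  · -- forward direction
    intro heig
    obtain ⟨x, ⟨v0, hv0V, hv0⟩, heq⟩ := (WHypergraph.eigen_iff hUni hk lam).1 heig
    set U := WHypergraph.comp T (fun f => ∀ u ∈ f, x u ≠ 0) v0 with hUdef
    have hUsub : U ⊆ T.verts := WHypergraph.comp_subset
    have hxU : ∀ v ∈ U, x v ≠ 0 := by
      intro v hv
      have h2 := (WHypergraph.mem_comp.1 hv).2
      induction h2 with
      | refl => exact hv0
      | tail _ hstep _ =>
          obtain ⟨f, hf, hPf, _, hy⟩ := hstep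
          exact hPf _ hy
    have hT' : (T.induce U).IsHypertree k :=
      ⟨⟨v0, WHypergraph.mem_comp_self hv0V⟩, WHypergraph.isUniform_induce hUni U,
        WHypergraph.comp_connected hUni.1 hv0V, WHypergraph.noCycle_induce hnc U⟩
    have heq' : ∀ v ∈ U, WHypergraph.locSum (T.induce U) x v = lam * x v ^ (k-1) := by
      intro v hv
      rw [← heq v (hUsub hv)]
      unfold WHypergraph.locSum
      apply Finset.sum_subset
      · intro f hf
        rw [Finset.mem_filter] at hf ⊢
        rw [WHypergraph.edges_induce, Finset.mem_filter] at hf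
        exact ⟨hf.1.1, hf.2⟩
      · intro f hf hnf
        rw [Finset.mem_filter] at hf hnf
        have hfU : ¬ f ⊆ U := by
          intro hsub
          exact hnf ⟨by rw [WHypergraph.edges_induce, Finset.mem_filter]
                        exact ⟨hf.1, hsub⟩, hf.2⟩
        have hzero : ∃ u ∈ f.erase v, x u = 0 := by
          by_contra hno
          push_neg at hno
          apply hfU
          apply WHypergraph.comp_closure hUni.1 hf.1 ?_ hf.2 hv
          intro u hu
          by_cases huv : u = v
          · exact huv ▸ hxU v hv
          · exact hno u (Finset.mem_erase.2 ⟨huv, hu⟩)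
        obtain ⟨u, hu, hxu⟩ := hzero
        exact Finset.prod_eq_zero hu hxu
    refine ⟨T.induce U, ⟨⟨U, hUsub, rfl⟩, hT'⟩, ?_⟩
    rw [WHypergraph.phi_zero_iff (WHypergraph.isUniform_induce hUni U) hlam]
    exact WHypergraph.psi_eq_zero_of_eigen hT' hk hxU heq'
  · -- backward direction
    rintro ⟨T', ⟨⟨U0, hU0sub, rfl⟩, hT'tree⟩, hphi⟩
    have hψ0 : WHypergraph.psi (T.induce U0) lam = 0 :=
      (WHypergraph.phi_zero_iff (WHypergraph.isUniform_induce hUni U0) hlam).1 hphi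
    set cand := (T.verts.powerset).filter (fun U => (T.induce U).IsHypertree k ∧
      WHypergraph.psi (T.induce U) lam = 0) with hcand
    have hcand0 : U0 ∈ cand := by
      rw [hcand, Finset.mem_filter, Finset.mem_powerset]
      exact ⟨hU0sub, hT'tree, hψ0⟩
    obtain ⟨U1, hU1mem, hU1min⟩ := Finset.exists_min_image cand Finset.card ⟨U0, hcand0⟩
    rw [hcand, Finset.mem_filter, Finset.mem_powerset] at hU1mem
    obtain ⟨hU1sub, hU1tree, hU1ψ⟩ := hU1mem
    have hmin : ∀ U : Finset V, U ⊆ U1 → U ≠ U1 →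
        ((T.induce U1).induce U).IsHypertree k →
        WHypergraph.psi ((T.induce U1).induce U) lam ≠ 0 := by
      intro U hUsub hUne hUT
      rw [WHypergraph.induce_induce T hUsub] at hUT ⊢
      intro h0
      have hU : U ∈ cand := by
        rw [hcand, Finset.mem_filter, Finset.mem_powerset]
        exact ⟨hUsub.trans hU1sub, hUT, h0⟩
      have h1 := hU1min U hU
      have hlt : U.card < U1.card := Finset.card_lt_card (lt_of_le_of_ne hUsub hUne)
      omega
    obtain ⟨r, hr⟩ := hU1tree.1
    rw [WHypergraph.verts_induce] at hr
    obtain ⟨y, hy, heqy⟩ := WHypergraph.exists_partial hk hlam (T.induce U1).edges.card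
      (T.induce U1) rfl hU1tree (by
        intro U hUsub hUne hUT
        rw [WHypergraph.verts_induce] at hUsub hUne
        exact hmin U hUsub hUne hUT) r (by rw [WHypergraph.verts_induce]; exact hr)
    rw [WHypergraph.verts_induce] at hy heqy
    have hstar := WHypergraph.star hk (T.induce U1).edges.card (T.induce U1) rfl hU1tree r
      (by rw [WHypergraph.verts_induce]; exact hr) y
      (by rw [WHypergraph.verts_induce]; exact hy)
      (by rw [WHypergraph.verts_induce]; exact fun v hv hvr => heqy v hv hvr)
    rw [hU1ψ, zero_mul, WHypergraph.verts_induce,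
      WHypergraph.induce_induce T (Finset.erase_subset _ _)] at hstar
    have hψer : WHypergraph.psi (T.induce (U1.erase r)) lam ≠ 0 := by
      have h := WHypergraph.psi_subforest_ne_zero hU1tree hk
        (fun U h1 h2 h3 => hmin U (by rwa [WHypergraph.verts_induce] at h1)
          (by rwa [WHypergraph.verts_induce] at h2) h3)
        (U1.erase r).card (U1.erase r) rfl
        (by rw [WHypergraph.verts_induce]; exact Finset.erase_subset _ _)
        (by
          rw [WHypergraph.verts_induce]
          exact fun hcontra => (Finset.notMem_erase r U1) (by rw [hcontra]; exact hr))
      rwa [WHypergraph.induce_induce T (Finset.erase_subset _ _)] at h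
    have hD : lam * y r ^ (k-1) - WHypergraph.locSum (T.induce U1) y r = 0 := by
      rcases mul_eq_zero.1 hstar.symm with h | h
      · exact h
      · exact absurd h hψer
    have heqfull : ∀ v ∈ U1, WHypergraph.locSum (T.induce U1) y v = lam * y v ^ (k-1) := by
      intro v hv
      by_cases hvr : v = r
      · subst hvr
        linear_combination -hD
      · exact heqy v hv hvr
    -- extend by zero
    set x : V → ℂ := fun v => if v ∈ U1 then y v else 0 with hxdef
    apply (WHypergraph.eigen_iff hUni hk lam).2
    refine ⟨x, ⟨r, hU1sub hr, by rw [hxdef]; simp only [if_pos hr]; exact hy r hr⟩, ?_⟩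
    intro v hv
    by_cases hvU : v ∈ U1
    · have hxv : x v = y v := by rw [hxdef]; simp only [if_pos hvU]
      rw [hxv, ← heqfull v hvU]
      unfold WHypergraph.locSum
      rw [← Finset.sum_subset (s₁ := (T.induce U1).edges.filter (fun e => v ∈ e))
        (s₂ := T.edges.filter (fun e => v ∈ e)) ?_ ?_]
      · apply Finset.sum_congr rfl
        intro f hf
        rw [Finset.mem_filter, WHypergraph.edges_induce, Finset.mem_filter] at hf
        apply Finset.prod_congr rfl
        intro u hu
        have huU : u ∈ U1 := hf.1.2 (Finset.mem_of_mem_erase hu)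
        rw [hxdef]
        simp only [if_pos huU]
      · intro f hf
        rw [Finset.mem_filter] at hf ⊢
        rw [WHypergraph.edges_induce, Finset.mem_filter] at hf
        exact ⟨hf.1.1, hf.2⟩
      · intro f hf hnf
        rw [Finset.mem_filter] at hf hnf
        have hfU : ¬ f ⊆ U1 := by
          intro hsub
          exact hnf ⟨by rw [WHypergraph.edges_induce, Finset.mem_filter]
                        exact ⟨hf.1, hsub⟩, hf.2⟩
        have hle := WHypergraph.inter_card_le_one hT hU1tree.2.2.1 hf.1 hfU
        obtain ⟨u, hu⟩ : (f.erase v).Nonempty := by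
          apply Finset.card_pos.1
          rw [Finset.card_erase_of_mem hf.2, hUni.2 f hf.1]
          omega
        have huU : u ∉ U1 := by
          intro huU
          have h1 : u ∈ f ∩ U1 := Finset.mem_inter.2 ⟨Finset.mem_of_mem_erase hu, huU⟩
          have h2 : v ∈ f ∩ U1 := Finset.mem_inter.2 ⟨hf.2, hvU⟩
          have := Finset.card_le_one.1 hle u h1 v h2
          exact (Finset.mem_erase.1 hu).1 this
        apply Finset.prod_eq_zero hu
        rw [hxdef]
        simp only [if_neg huU]
    · have hxv : x v = 0 := by rw [hxdef]; simp only [if_neg hvU]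
      rw [hxv, zero_pow (show k - 1 ≠ 0 by omega), mul_zero]
      apply Finset.sum_eq_zero
      intro f hf
      rw [Finset.mem_filter] at hf
      have hfU : ¬ f ⊆ U1 := fun h => hvU (h hf.2)
      have hle := WHypergraph.inter_card_le_one hT hU1tree.2.2.1 hf.1 hfU
      have hzero : ∃ u ∈ f.erase v, u ∉ U1 := by
        by_contra hno
        push_neg at hno
        have hsub : f.erase v ⊆ f ∩ U1 := fun u hu =>
          Finset.mem_inter.2 ⟨Finset.mem_of_mem_erase hu, hno u hu⟩
        have h1 := Finset.card_le_card hsub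
        rw [Finset.card_erase_of_mem hf.2, hUni.2 f hf.1] at h1
        omega
      obtain ⟨u, hu, huU⟩ := hzero
      apply Finset.prod_eq_zero hu
      rw [hxdef]
      simp only [if_neg huU]
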